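/- arXiv:cs/0107031 — 9 statements merged into one kernel-verified Lean document; each statement's English description precedes it below -/
import Mathlib

section
/- Let G be the context-free grammar over a k-letter alphabet {c_1, …, c_k} with single nonterminal S and productions S → Λ, S → SS, and, for every i ∈ {1, …, k}, S → c_i S c_i and S → c_i S c_i S c_i. Then the language L(G) generated by G is exactly the set of solvable one-row Clickomania puzzles, i.e., a word w over {c_1, …, c_k} is in L(G) if and only if w is solvable. -/
/-- A move: delete a maximal run of at least two consecutive equal letters.
`w = x ++ c^m ++ y` with `m ≥ 2`, `x` not ending in `c`, `y` not starting in `c`;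
the result is `x ++ y`. -/
def ClickMove {α : Type*} (w w' : List α) : Prop :=
  ∃ (x y : List α) (c : α) (m : ℕ),
    2 ≤ m ∧
    x.getLast? ≠ some c ∧
    y.head? ≠ some c ∧
    w = x ++ List.replicate m c ++ y ∧
    w' = x ++ y

/-- A word is solvable if some finite sequence of moves reduces it to the empty word. -/
def Solvable {α : Type*} (w : List α) : Prop :=
  Relation.ReflTransGen ClickMove w []

/-- `InL w` means `w ∈ L(G)` for the context-free grammar `G` with single
nonterminal `S` and productions `S → Λ`, `S → SS`, and for each letter `c`,
`S → c S c` and `S → c S c S c`. -/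
inductive InL {α : Type*} : List α → Prop
  | nil : InL ([] : List α)
  | append {x y : List α} : InL x → InL y → InL (x ++ y)
  | wrap2 (c : α) {x : List α} : InL x → InL ([c] ++ x ++ [c])
  | wrap3 (c : α) {x y : List α} : InL x → InL y → InL ([c] ++ x ++ [c] ++ y ++ [c])

namespace ClickAux

open List

variable {α : Type*}

/-- Decompose a list as a maximal head run of `c`'s followed by the rest. -/
lemma head_decomp (y : List α) (c : α) :
    ∃ e y', y = replicate e c ++ y' ∧ y'.head? ≠ some c := by
  induction y with
  | nil => exact ⟨0, [], rfl, by simp⟩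
  | cons a t ih =>
    by_cases h : a = c
    · obtain ⟨e, y', h1, h2⟩ := ih
      exact ⟨e + 1, y', by simp [h1, List.replicate_succ, h], h2⟩
    · exact ⟨0, a :: t, rfl, by simpa using h⟩

/-- Decompose a list as a prefix followed by a maximal trailing run of `c`'s. -/
lemma tail_decomp (x : List α) (c : α) :
    ∃ e x', x = x' ++ replicate e c ∧ x'.getLast? ≠ some c := by
  obtain ⟨e, y', h1, h2⟩ := head_decomp x.reverse c
  refine ⟨e, y'.reverse, ?_, ?_⟩
  · have := congrArg List.reverse h1
    simpa [List.reverse_append] using this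
  · simpa [List.getLast?_reverse] using h2

lemma head?_run (y : List α) (c : α) {n : ℕ} (hn : 1 ≤ n) :
    (replicate n c ++ y).head? = some c := by
  obtain ⟨m, rfl⟩ := Nat.exists_eq_add_of_le hn
  simp [List.replicate_add, List.replicate_succ]

lemma getLast?_run (x : List α) (c : α) {n : ℕ} (hn : 1 ≤ n) :
    (x ++ replicate n c).getLast? = some c := by
  rw [← List.head?_reverse, List.reverse_append, List.reverse_replicate]
  exact head?_run _ _ hn

lemma head?_congr_run (x2 y : List α) (c : α) {g G : ℕ} (hg : 1 ≤ g) (hG : 1 ≤ G) :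
    (x2 ++ (replicate G c ++ y)).head? = (x2 ++ (replicate g c ++ y)).head? := by
  cases x2 with
  | nil => simp [head?_run _ _ hg, head?_run _ _ hG]
  | cons a t => simp

lemma getLast?_congr_run (x y1 : List α) (c : α) {g G : ℕ} (hg : 1 ≤ g) (hG : 1 ≤ G) :
    (x ++ replicate G c ++ y1).getLast? = (x ++ replicate g c ++ y1).getLast? := by
  have h1 : (x ++ replicate G c ++ y1).reverse.head? = (x ++ replicate G c ++ y1).getLast? :=
    List.head?_reverse
  have h2 : (x ++ replicate g c ++ y1).reverse.head? = (x ++ replicate g c ++ y1).getLast? :=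
    List.head?_reverse
  rw [← h1, ← h2]
  simp only [List.reverse_append, List.reverse_replicate, List.append_assoc]
  exact head?_congr_run _ _ _ hg hG

/-- Parsing lemma, asymmetric version: assumes `|x| ≤ |s|`. -/
lemma parse_aux (x y s t : List α) (c d : α) (g q : ℕ) (_hg : 1 ≤ g) (hq : 1 ≤ q)
    (hy : y.head? ≠ some c) (hs : s.getLast? ≠ some d) (ht : t.head? ≠ some d)
    (hlen : x.length ≤ s.length)
    (h : x ++ (replicate g c ++ y) = s ++ (replicate q d ++ t)) :
    (c = d ∧ x = s ∧ g = q ∧ y = t) ∨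
    (∃ y1, s = x ++ replicate g c ++ y1 ∧ y = y1 ++ replicate q d ++ t) := by
  have hxp : x <+: s :=
    List.prefix_of_prefix_length_le ⟨_, h⟩ ⟨_, rfl⟩ hlen
  obtain ⟨r, rfl⟩ := hxp
  rw [List.append_assoc, List.append_cancel_left_eq] at h
  -- h : replicate g c ++ y = r ++ (replicate q d ++ t)
  by_cases hr : g ≤ r.length
  · have hpre : replicate g c <+: r :=
      List.prefix_of_prefix_length_le ⟨_, h⟩ ⟨_, rfl⟩ (by simpa using hr)
    obtain ⟨y1, rfl⟩ := hpre
    rw [List.append_assoc, List.append_cancel_left_eq] at h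
    right
    exact ⟨y1, by simp, by simp [h]⟩
  · push_neg at hr
    have hrp : r <+: replicate g c :=
      List.prefix_of_prefix_length_le ⟨_, h.symm⟩ ⟨_, rfl⟩ (by simpa using hr.le)
    have hrep : ∃ l, r = replicate l c :=
      ⟨r.length, List.eq_replicate_length.mpr fun b hb => List.eq_of_mem_replicate (hrp.subset hb)⟩
    obtain ⟨l, rfl⟩ := hrep
    have hl : l < g := by simpa using hr
    have hsplit : replicate g c = replicate l c ++ replicate (g - l) c := by
      rw [← List.replicate_add]; congr 1; omega
    rw [hsplit, List.append_assoc, List.append_cancel_left_eq] at h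
    -- h : replicate (g - l) c ++ y = replicate l c ++ (replicate q d ++ t)  -- no, cancelled
    have hcd : c = d := by
      have h1 := head?_run y c (n := g - l) (by omega)
      have h2 := head?_run t d hq
      rw [h] at h1; rw [h2] at h1; exact (Option.some_inj.mp h1).symm
    have hr0 : l = 0 := by
      by_contra hne
      apply hs
      rw [← hcd]
      exact getLast?_run x c (Nat.one_le_iff_ne_zero.mpr hne)
    subst hr0
    simp only [List.replicate_zero, List.append_nil, Nat.sub_zero] at h hs hlen ⊢
    -- h : replicate g c ++ y = replicate q d ++ t
    subst hcd
    left
    rcases lt_trichotomy g q with hgq | hgq | hgq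
    · exfalso
      have hsplit2 : replicate q c = replicate g c ++ replicate (q - g) c := by
        rw [← List.replicate_add]; congr 1; omega
      rw [hsplit2, List.append_assoc, List.append_cancel_left_eq] at h
      apply hy
      rw [h]; exact head?_run t c (by omega)
    · subst hgq
      rw [List.append_cancel_left_eq] at h
      exact ⟨rfl, by simp, rfl, h⟩
    · exfalso
      have hsplit2 : replicate g c = replicate q c ++ replicate (g - q) c := by
        rw [← List.replicate_add]; congr 1; omega
      rw [hsplit2, List.append_assoc, List.append_cancel_left_eq] at h
      apply ht
      rw [← h]; exact head?_run y c (by omega)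

/-- Full parsing lemma: two maximal-run decompositions of the same word either
coincide or are disjoint. -/
lemma parse (x y s t : List α) (c d : α) (g q : ℕ) (hg : 1 ≤ g) (hq : 1 ≤ q)
    (hx : x.getLast? ≠ some c) (hy : y.head? ≠ some c)
    (hs : s.getLast? ≠ some d) (ht : t.head? ≠ some d)
    (h : x ++ replicate g c ++ y = s ++ replicate q d ++ t) :
    (c = d ∧ x = s ∧ g = q ∧ y = t) ∨
    (∃ y1, s = x ++ replicate g c ++ y1 ∧ y = y1 ++ replicate q d ++ t) ∨
    (∃ x2, x = s ++ replicate q d ++ x2 ∧ t = x2 ++ replicate g c ++ y) := by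
  rcases le_total x.length s.length with hl | hl
  · rcases parse_aux x y s t c d g q hg hq hy hs ht hl (by simpa [List.append_assoc] using h)
      with h1 | h2
    · exact Or.inl h1
    · exact Or.inr (Or.inl h2)
  · rcases parse_aux s t x y d c q g hq hg ht hx hy hl (by simpa [List.append_assoc] using h.symm)
      with ⟨h1, h2, h3, h4⟩ | h2
    · exact Or.inl ⟨h1.symm, h2.symm, h3.symm, h4.symm⟩
    · exact Or.inr (Or.inr h2)

/-- The pumping lemma: enlarging a maximal run preserves solvability. -/
lemma pump {u : List α} (hu : Solvable u) :
    ∀ (c : α) (x y : List α) (g G : ℕ), x.getLast? ≠ some c → y.head? ≠ some c →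
      1 ≤ g → g ≤ G → u = x ++ replicate g c ++ y →
      Solvable (x ++ replicate G c ++ y) := by
  induction hu using Relation.ReflTransGen.head_induction_on with
  | refl =>
    intro c x y g G hx hy hg hG he
    exfalso
    have := congrArg List.length he
    simp at this
    omega
  | head hstep htail ih =>
    intro c x y g G hx hy hg hG he
    obtain ⟨s, t, d, q, hq2, hs, ht, hw, hw'⟩ := hstep
    rw [he] at hw
    rcases parse x y s t c d g q hg (by omega) hx hy hs ht hw with
      ⟨hcd, rfl, hgq, rfl⟩ | ⟨y1, hsy, hyy⟩ | ⟨x2, hxx, htt⟩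
    · -- the deleted run is exactly our distinguished run
      refine Relation.ReflTransGen.head ⟨x, y, c, G, by omega, hx, hy, rfl, rfl⟩ ?_
      exact hw' ▸ htail
    · -- the deleted run lies inside y : y = y1 ++ replicate q d ++ t
      obtain ⟨e, y'', hdec, hy''⟩ := head_decomp (y1 ++ t) c
      have hu' : s ++ t = x ++ replicate (g + e) c ++ y'' := by
        simp only [hsy, List.replicate_add, List.append_assoc, hdec]
      have hsol := ih c x y'' (g + e) (G + e) hx hy'' (by omega) (by omega) (hw'.trans hu')
      -- now a move from x ++ c^G ++ y deletes the run d^q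
      have hlast : (x ++ replicate G c ++ y1).getLast? ≠ some d := by
        rw [getLast?_congr_run x y1 c hg (by omega)]
        have : s.getLast? = (x ++ replicate g c ++ y1).getLast? := by rw [hsy]
        rw [← this]; exact hs
      refine Relation.ReflTransGen.head
        ⟨x ++ replicate G c ++ y1, t, d, q, hq2, hlast, ht, ?_, rfl⟩ ?_
      · rw [hyy]; simp [List.append_assoc]
      · have : x ++ replicate G c ++ y1 ++ t = x ++ replicate (G + e) c ++ y'' := by
          simp only [List.replicate_add, List.append_assoc, hdec]
        rw [this]; exact hsol
    · -- the deleted run lies inside x : x = s ++ replicate q d ++ x2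
      obtain ⟨e, x'', hdec, hx''⟩ := tail_decomp (s ++ x2) c
      have hu' : s ++ t = x'' ++ replicate (e + g) c ++ y := by
        rw [htt, List.replicate_add]
        simp only [← List.append_assoc, hdec]
      have hsol := ih c x'' y (e + g) (e + G) hx'' hy (by omega) (by omega) (hw'.trans hu')
      have hhead : (x2 ++ replicate G c ++ y).head? ≠ some d := by
        have h1 : (x2 ++ (replicate G c ++ y)).head? = (x2 ++ (replicate g c ++ y)).head? :=
          head?_congr_run x2 y c hg (by omega)
        have h2 : t.head? = (x2 ++ (replicate g c ++ y)).head? := by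
          rw [htt]; simp [List.append_assoc]
        simp only [List.append_assoc] at *
        rw [h1, ← h2]; exact ht
      refine Relation.ReflTransGen.head (b := s ++ (x2 ++ replicate G c ++ y))
        ⟨s, x2 ++ replicate G c ++ y, d, q, hq2, hs, hhead, ?_, rfl⟩ ?_
      · rw [hxx]; simp [List.append_assoc]
      · have : s ++ (x2 ++ replicate G c ++ y) = x'' ++ replicate (e + G) c ++ y := by
          rw [List.replicate_add]
          simp only [← List.append_assoc, hdec]
        rw [this]; exact hsol

/-- Inserting a run of `m ≥ 2` equal letters anywhere preserves solvability. -/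
lemma insert_run (x y : List α) (c : α) (m : ℕ) (hm : 2 ≤ m) (h : Solvable (x ++ y)) :
    Solvable (x ++ replicate m c ++ y) := by
  obtain ⟨a, x', hxd, hx'⟩ := tail_decomp x c
  obtain ⟨b, y', hyd, hy'⟩ := head_decomp y c
  rcases Nat.eq_zero_or_pos (a + b) with h0 | hpos
  · have ha : a = 0 := by omega
    have hb : b = 0 := by omega
    subst ha hb
    simp only [List.replicate_zero, List.append_nil] at hxd
    simp only [List.replicate_zero, List.nil_append] at hyd
    subst hxd hyd
    exact Relation.ReflTransGen.head ⟨x, y, c, m, hm, hx', hy', rfl, rfl⟩ h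
  · have hxy : x ++ y = x' ++ replicate (a + b) c ++ y' := by
      simp only [hxd, hyd, List.replicate_add, List.append_assoc]
    have := pump (hxy ▸ h) c x' y' (a + b) (a + m + b) hx' hy' hpos (by omega) rfl
    have heq : x ++ replicate m c ++ y = x' ++ replicate (a + m + b) c ++ y' := by
      rw [show a + m + b = a + (m + b) from by omega]
      simp only [hxd, hyd, List.replicate_add, List.append_assoc]
    rw [heq]; exact this

/-- A non-maximal move: delete any run of at least two consecutive equal letters. -/
def Move' (w w' : List α) : Prop :=
  ∃ (x y : List α) (c : α) (m : ℕ),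
    2 ≤ m ∧ w = x ++ List.replicate m c ++ y ∧ w' = x ++ y

lemma solvable_of_move'_star {w : List α}
    (h : Relation.ReflTransGen Move' w []) : Solvable w := by
  induction h using Relation.ReflTransGen.head_induction_on with
  | refl => exact Relation.ReflTransGen.refl
  | head hstep _ ih =>
    obtain ⟨x, y, c, m, hm, rfl, rfl⟩ := hstep
    exact insert_run x y c m hm ih

lemma move'_context {a b z z' : List α} (h : Move' z z') :
    Move' (a ++ z ++ b) (a ++ z' ++ b) := by
  obtain ⟨x, y, c, m, hm, rfl, rfl⟩ := h
  exact ⟨a ++ x, y ++ b, c, m, hm, by simp [List.append_assoc], by simp [List.append_assoc]⟩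

lemma move'_star_context {a b z z' : List α}
    (h : Relation.ReflTransGen Move' z z') :
    Relation.ReflTransGen Move' (a ++ z ++ b) (a ++ z' ++ b) :=
  h.lift (fun u => a ++ u ++ b) (fun _ _ h => move'_context h)

lemma move'_replicate (c : α) (m : ℕ) (hm : 2 ≤ m) :
    Move' (replicate m c) ([] : List α) :=
  ⟨[], [], c, m, hm, by simp, rfl⟩

/-- The grammar generates only words solvable with (possibly non-maximal) moves. -/
lemma inL_move'_star {w : List α} (h : InL w) :
    Relation.ReflTransGen Move' w [] := by
  induction h with
  | nil => exact Relation.ReflTransGen.refl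
  | @append u v hx hy ihx ihy =>
    have h1 : Relation.ReflTransGen Move' ([] ++ u ++ v) ([] ++ [] ++ v) :=
      move'_star_context ihx
    simp only [List.nil_append] at h1
    exact h1.trans ihy
  | @wrap2 c u hx ihx =>
    have h1 : Relation.ReflTransGen Move' ([c] ++ u ++ [c]) ([c] ++ [] ++ [c]) :=
      move'_star_context ihx
    refine h1.trans (Relation.ReflTransGen.single ?_)
    have h2 : ([c] ++ [] ++ [c] : List α) = replicate 2 c := by
      simp [List.replicate_succ]
    rw [h2]
    exact move'_replicate c 2 le_rfl
  | @wrap3 c u v hx hy ihx ihy =>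
    have h1 : Relation.ReflTransGen Move' ([c] ++ u ++ ([c] ++ v ++ [c]))
        ([c] ++ [] ++ ([c] ++ v ++ [c])) := move'_star_context ihx
    have h2 : Relation.ReflTransGen Move' (([c] ++ [] ++ [c]) ++ v ++ [c])
        (([c] ++ [] ++ [c]) ++ [] ++ [c]) := move'_star_context ihy
    have h3 : Move' (([c] ++ [] ++ [c]) ++ [] ++ [c]) [] := by
      have : (([c] ++ [] ++ [c]) ++ [] ++ [c] : List α) = replicate 3 c := by
        simp [List.replicate_succ]
      rw [this]; exact move'_replicate c 3 (by omega)
    have e1 : ([c] ++ u ++ [c] ++ v ++ [c] : List α) = [c] ++ u ++ ([c] ++ v ++ [c]) := by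
      simp [List.append_assoc]
    have e2 : ([c] ++ [] ++ ([c] ++ v ++ [c]) : List α) = ([c] ++ [] ++ [c]) ++ v ++ [c] := by
      simp [List.append_assoc]
    rw [e1]
    refine h1.trans ?_
    rw [e2]
    exact h2.trans (Relation.ReflTransGen.single h3)

/-- Runs of length `m ≠ 1` are in `L(G)`. -/
lemma inL_replicate (c : α) : ∀ m, m ≠ 1 → InL (replicate m c)
  | 0, _ => InL.nil
  | 1, h => absurd rfl h
  | 2, _ => by simpa [List.replicate_succ] using InL.wrap2 c InL.nil
  | 3, _ => by simpa [List.replicate_succ] using InL.wrap3 c InL.nil InL.nil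
  | (m + 4), _ => by
    have h1 := inL_replicate c 2 (by omega)
    have h2 := inL_replicate c (m + 2) (by omega)
    have h3 := InL.append h1 h2
    have h4 : 2 + (m + 2) = m + 4 := by omega
    rwa [← List.replicate_add, h4] at h3

/-- `L(G)` is closed under insertion of `L(G)` words. -/
lemma inL_insert {z : List α} (hz : InL z) {u : List α} (hu : InL u) :
    ∀ x y, u = x ++ y → InL (x ++ z ++ y) := by
  induction hu with
  | nil =>
    intro x y h
    obtain ⟨rfl, rfl⟩ := List.append_eq_nil_iff.mp h.symm
    simpa
  | @append u v hu hv ihu ihv =>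
    intro x y h
    rcases List.append_eq_append_iff.mp h with ⟨r, rfl, rfl⟩ | ⟨r, rfl, rfl⟩
    · have := InL.append hu (ihv r y rfl)
      simpa [List.append_assoc] using this
    · have := InL.append (ihu x r rfl) hv
      simpa [List.append_assoc] using this
  | @wrap2 c u hu ihu =>
    intro x y h
    cases x with
    | nil =>
      simp only [List.nil_append] at h
      subst h
      simpa using InL.append hz (InL.wrap2 c hu)
    | cons a x' =>
      simp only [List.append_assoc, List.cons_append, List.nil_append,
        List.singleton_append] at h
      obtain ⟨rfl, h2⟩ := List.cons_eq_cons.mp h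
      rcases List.append_eq_append_iff.mp h2 with ⟨r, rfl, hr⟩ | ⟨r, rfl, rfl⟩
      · cases r with
        | nil =>
          simp only [List.nil_append] at hr
          subst hr
          have := InL.wrap2 c (ihu u [] (by simp))
          simpa [List.append_assoc] using this
        | cons b r' =>
          simp only [List.cons_append] at hr
          obtain ⟨rfl, hr2⟩ := List.cons_eq_cons.mp hr
          obtain ⟨rfl, rfl⟩ := List.append_eq_nil_iff.mp hr2.symm
          have := InL.append (InL.wrap2 c hu) hz
          simpa [List.append_assoc] using this
      · have := InL.wrap2 c (ihu x' r rfl)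
        simpa [List.append_assoc] using this
  | @wrap3 c u v hu hv ihu ihv =>
    intro x y h
    cases x with
    | nil =>
      simp only [List.nil_append] at h
      subst h
      simpa using InL.append hz (InL.wrap3 c hu hv)
    | cons a x' =>
      simp only [List.append_assoc, List.cons_append, List.nil_append,
        List.singleton_append] at h
      obtain ⟨rfl, h2⟩ := List.cons_eq_cons.mp h
      rcases List.append_eq_append_iff.mp h2 with ⟨r, rfl, hr⟩ | ⟨r, rfl, rfl⟩
      · cases r with
        | nil =>
          simp only [List.nil_append] at hr
          subst hr
          have := InL.wrap3 c (ihu u [] (by simp)) hv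
          simpa [List.append_assoc] using this
        | cons b r' =>
          simp only [List.cons_append] at hr
          obtain ⟨rfl, hr2⟩ := List.cons_eq_cons.mp hr
          rcases List.append_eq_append_iff.mp hr2 with ⟨p, rfl, hp⟩ | ⟨p, rfl, rfl⟩
          · cases p with
            | nil =>
              simp only [List.nil_append] at hp
              subst hp
              have := InL.wrap3 c hu (ihv v [] (by simp))
              simpa [List.append_assoc] using this
            | cons d p' =>
              simp only [List.cons_append] at hp
              obtain ⟨rfl, hp2⟩ := List.cons_eq_cons.mp hp
              obtain ⟨rfl, rfl⟩ := List.append_eq_nil_iff.mp hp2.symm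
              have := InL.append (InL.wrap3 c hu hv) hz
              simpa [List.append_assoc] using this
          · have := InL.wrap3 c hu (ihv r' p rfl)
            simpa [List.append_assoc] using this
      · have := InL.wrap3 c (ihu x' r rfl) hv
        simpa [List.append_assoc] using this

/-- Solvable words are in `L(G)`. -/
lemma inL_of_solvable {w : List α} (h : Solvable w) : InL w := by
  induction h using Relation.ReflTransGen.head_induction_on with
  | refl => exact InL.nil
  | head hstep _ ih =>
    obtain ⟨x, y, c, m, hm, _, _, rfl, hw'⟩ := hstep
    subst hw'
    exact inL_insert (inL_replicate c m (by omega)) ih x y rfl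

end ClickAux

/-- Theorem: the language `L(G)` is exactly the language of solvable one-row
Clickomania puzzles over the alphabet `{c_1, …, c_k}`. -/
theorem grammar_iff_solvable {k : ℕ} (w : List (Fin k)) :
    InL w ↔ Solvable w := by
  constructor
  · intro h
    exact ClickAux.solvable_of_move'_star (ClickAux.inL_move'_star h)
  · exact ClickAux.inL_of_solvable
end

section
/- If a word w over the alphabet {c_1, …, c_k} belongs to L(G), where G is the grammar with productions S → Λ, S → SS, S → c_i S c_i and S → c_i S c_i S c_i for each i, then w is a solvable one-row Clickomania puzzle. -/
lemma clickMove_mk {α : Type*} {w w' : List α} (x y : List α) (c : α) (m : ℕ)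
    (hm : 2 ≤ m) (hx : x.getLast? ≠ some c) (hy : y.head? ≠ some c)
    (hw : w = x ++ List.replicate m c ++ y) (hw' : w' = x ++ y) : ClickMove w w' :=
  ⟨x, y, c, m, hm, hx, hy, hw, hw'⟩

/-- Insertion lemma: inserting a block `c^j` (j ≥ 2) anywhere into a solvable
word keeps it solvable. -/
lemma solvable_insert {α : Type*} {w : List α} (hw : Solvable w) :
    ∀ (u z : List α) (c : α) (j : ℕ), 2 ≤ j → w = u ++ z →
      Solvable (u ++ List.replicate j c ++ z) := by
  induction hw using Relation.ReflTransGen.head_induction_on with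
  | refl =>
      intro u z c j hj huz
      obtain ⟨hu, hz⟩ := List.append_eq_nil_iff.mp huz.symm
      subst hu; subst hz
      refine Relation.ReflTransGen.single ?_
      exact ⟨[], [], c, j, hj, by simp, by simp, by simp, rfl⟩
  | head hstep htail ih =>
      intro u z c j hj huz
      obtain ⟨x, y, d, m, hm, hx, hy, hweq, hw'eq⟩ := hstep
      subst hw'eq
      have hm1 : m ≠ 0 := by omega
      have hj1 : j ≠ 0 := by omega
      have hsplit : u ++ z = x ++ (List.replicate m d ++ y) := by
        rw [← huz, hweq, List.append_assoc]
      rcases List.append_eq_append_iff.mp hsplit with ⟨s, hxs, hzs⟩ | ⟨s, hus, hrest⟩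
      · -- split point inside (or at right end of) x : x = u ++ s, z = s ++ rep ++ y
        subst hxs; subst hzs
        by_cases hs : s = []
        · subst hs
          simp only [List.append_nil] at hx htail ih ⊢
          by_cases hcd : c = d
          · subst hcd
            -- whole run u ++ c^(j+m) ++ y, delete it
            refine Relation.ReflTransGen.head
              (clickMove_mk u y c (j + m) (by omega) hx hy ?_ rfl) htail
            rw [List.replicate_add]
            simp only [List.append_assoc, List.nil_append, List.append_nil]
          · -- delete d^m; left neighbor is c ≠ d
            refine Relation.ReflTransGen.head
              (clickMove_mk (u ++ List.replicate j c) y d m hm ?_ hy ?_ rfl) ?_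
            · rw [List.getLast?_append_of_ne_nil _ (by simp [hj1])]
              rw [List.getLast?_replicate]
              simp [hj1, hcd, Ne.symm hcd]
            · simp [List.append_assoc]
            · have := ih u y c j hj rfl
              simpa [List.append_assoc, Solvable] using this
        · -- s ≠ [] : run d^m still maximal
          have hlast : (u ++ List.replicate j c ++ s).getLast? ≠ some d := by
            rw [List.getLast?_append_of_ne_nil _ hs]
            rw [List.getLast?_append_of_ne_nil _ hs] at hx
            exact hx
          refine Relation.ReflTransGen.head
            (clickMove_mk (u ++ List.replicate j c ++ s) y d m hm hlast hy
              (by simp [List.append_assoc]) rfl) ?_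
          have := ih u (s ++ y) c j hj (by simp [List.append_assoc])
          simpa [List.append_assoc, Solvable] using this
      · -- u = x ++ s, rep ++ y = s ++ z
        subst hus
        rcases List.append_eq_append_iff.mp hrest with ⟨t, hst, hyt⟩ | ⟨e, hse, hze⟩
        · -- s = rep ++ t, y = t ++ z : split point inside (or at left end of) y
          subst hst; subst hyt
          by_cases ht : t = []
          · subst ht
            simp only [List.append_nil] at hy htail ih ⊢
            by_cases hcd : c = d
            · subst hcd
              refine Relation.ReflTransGen.head
                (clickMove_mk x z c (m + j) (by omega) hx hy ?_ rfl) htail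
              rw [List.replicate_add]
              simp only [List.append_assoc, List.nil_append, List.append_nil]
            · refine Relation.ReflTransGen.head
                (clickMove_mk x (List.replicate j c ++ z) d m hm hx ?_
                  (by simp [List.append_assoc]) rfl) ?_
              · rw [List.head?_append_of_ne_nil _ (by simp [hj1])]
                rw [List.head?_replicate]
                simp [hj1, hcd, Ne.symm hcd]
              · have := ih x z c j hj rfl
                simpa [List.append_assoc, Solvable] using this
          · have hhead : (t ++ (List.replicate j c ++ z)).head? ≠ some d := by
              rw [List.head?_append_of_ne_nil _ ht]
              rw [List.head?_append_of_ne_nil _ ht] at hy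
              exact hy
            refine Relation.ReflTransGen.head
              (clickMove_mk x (t ++ (List.replicate j c ++ z)) d m hm hx hhead
                (by simp [List.append_assoc]) rfl) ?_
            have := ih (x ++ t) z c j hj (by simp [List.append_assoc])
            simpa [List.append_assoc, Solvable] using this
        · -- split point inside the run: rep = s ++ e, z = e ++ y
          subst hze
          have hs' : s = List.replicate s.length d :=
            List.eq_replicate_length.mpr fun b hb =>
              List.eq_of_mem_replicate
                (show b ∈ List.replicate m d by
                  rw [hse]; exact List.mem_append_left _ hb)
          have he' : e = List.replicate e.length d :=
            List.eq_replicate_length.mpr fun b hb =>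
              List.eq_of_mem_replicate
                (show b ∈ List.replicate m d by
                  rw [hse]; exact List.mem_append_right _ hb)
          have hlen : s.length + e.length = m := by
            have := congrArg List.length hse
            simp at this
            omega
          by_cases ha0 : s.length = 0
          · -- s = [], split at left end of run
            have hs0 : s = [] := List.length_eq_zero_iff.mp ha0
            subst hs0
            simp only [List.append_nil] at hx ⊢
            have hbm : e.length = m := by omega
            by_cases hcd : c = d
            · subst hcd
              refine Relation.ReflTransGen.head
                (clickMove_mk x y c (j + e.length) (by omega) hx hy ?_ rfl) htail
              rw [List.replicate_add, ← he']
              simp only [List.append_assoc, List.nil_append, List.append_nil]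
            · refine Relation.ReflTransGen.head
                (clickMove_mk (x ++ List.replicate j c) y d e.length (by omega) ?_ hy
                  ?_ rfl) ?_
              · rw [List.getLast?_append_of_ne_nil _ (by simp [hj1])]
                rw [List.getLast?_replicate]
                simp [hj1, hcd, Ne.symm hcd]
              · rw [← he']
                simp [List.append_assoc]
              · have := ih x y c j hj rfl
                simpa [List.append_assoc, Solvable] using this
          · by_cases hb0 : e.length = 0
            · -- e = [], split at right end of run
              have he0 : e = [] := List.length_eq_zero_iff.mp hb0
              subst he0
              simp only [List.append_nil, List.nil_append, List.length_nil, Nat.add_zero] at hlen ⊢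
              have ham : s.length = m := by omega
              by_cases hcd : c = d
              · subst hcd
                refine Relation.ReflTransGen.head
                  (clickMove_mk x y c (s.length + j) (by omega) hx hy ?_ rfl) htail
                rw [List.replicate_add, ← hs']
                simp only [List.append_assoc, List.nil_append, List.append_nil]
              · refine Relation.ReflTransGen.head
                  (clickMove_mk x (List.replicate j c ++ y) d s.length (by omega) hx ?_
                    ?_ rfl) ?_
                · rw [List.head?_append_of_ne_nil _ (by simp [hj1])]
                  rw [List.head?_replicate]
                  simp [hj1, hcd, Ne.symm hcd]
                · rw [← hs']
                  simp [List.append_assoc]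
                · have := ih x y c j hj rfl
                  simpa [List.append_assoc, Solvable] using this
            · -- strictly inside the run
              have hworig : Solvable (x ++ List.replicate m d ++ y) :=
                Relation.ReflTransGen.head ⟨x, y, d, m, hm, hx, hy, rfl, rfl⟩ htail
              by_cases hcd : c = d
              · subst hcd
                refine Relation.ReflTransGen.head
                  (clickMove_mk x y c (s.length + j + e.length) (by omega) hx hy ?_ rfl)
                  htail
                rw [List.replicate_add, List.replicate_add, ← hs', ← he']
                simp only [List.append_assoc, List.nil_append, List.append_nil]
              · -- delete c^j, which lands back on the original solvable word
                have hsne : s ≠ [] := fun h => ha0 (by simp [h])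
                have hene : e ≠ [] := fun h => hb0 (by simp [h])
                refine Relation.ReflTransGen.head
                  (clickMove_mk (x ++ s) (e ++ y) c j hj ?_ ?_
                    (by simp [List.append_assoc]) rfl) ?_
                · rw [List.getLast?_append_of_ne_nil _ hsne, hs',
                    List.getLast?_replicate]
                  simp [ha0, hcd, Ne.symm hcd]
                · rw [List.head?_append_of_ne_nil _ hene, he', List.head?_replicate]
                  simp [hb0, hcd, Ne.symm hcd]
                · have heq : x ++ s ++ (e ++ y) = x ++ List.replicate m d ++ y := by
                    rw [hs', he', ← hlen, List.replicate_add]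
                    simp only [List.append_assoc, List.nil_append, List.append_nil]
                  rw [heq]
                  exact hworig

/-- Context lemma: grammar words can be erased within any solvable context. -/
lemma solvable_context {α : Type*} {w : List α} (hw : InL w) :
    ∀ u z : List α, Solvable (u ++ z) → Solvable (u ++ w ++ z) := by
  induction hw with
  | nil => intro u z h; simpa using h
  | @append x y hx hy ihx ihy =>
      intro u z h
      have := ihx u (y ++ z) (by
        rw [← List.append_assoc]; exact ihy u z h)
      simpa [List.append_assoc] using this
  | @wrap2 c x hx ihx =>
      intro u z h
      have h2 : Solvable (u ++ List.replicate 2 c ++ z) :=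
        solvable_insert h u z c 2 le_rfl rfl
      have := ihx (u ++ [c]) ([c] ++ z) (by
        have heq : u ++ [c] ++ ([c] ++ z) = u ++ List.replicate 2 c ++ z := by
          simp [List.append_assoc]
        rw [heq]; exact h2)
      simpa [List.append_assoc] using this
  | @wrap3 c x y hx hy ihx ihy =>
      intro u z h
      have h3 : Solvable (u ++ List.replicate 3 c ++ z) :=
        solvable_insert h u z c 3 (by norm_num) rfl
      have hy' := ihy (u ++ [c] ++ [c]) ([c] ++ z) (by
        have heq : u ++ [c] ++ [c] ++ ([c] ++ z) = u ++ List.replicate 3 c ++ z := by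
          simp [List.append_assoc]
        rw [heq]; exact h3)
      have := ihx (u ++ [c]) ([c] ++ y ++ [c] ++ z) (by
        have heq : u ++ [c] ++ ([c] ++ y ++ [c] ++ z)
            = u ++ [c] ++ [c] ++ y ++ ([c] ++ z) := by
          simp [List.append_assoc]
        rw [heq]; exact hy')
      simpa [List.append_assoc] using this

/-- If `w ∈ L(G)` then `w` is a solvable one-row Clickomania puzzle. -/
theorem solvable_of_grammar {k : ℕ} (w : List (Fin k)) (hw : InL w) :
    Solvable w := by
  have := solvable_context hw [] [] Relation.ReflTransGen.refl
  simpa using this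
end

section
/- If a word w over the alphabet {c_1, …, c_k} is a solvable one-row Clickomania puzzle, then w belongs to L(G), where G is the grammar with productions S → Λ, S → SS, S → c_i S c_i and S → c_i S c_i S c_i for each i. -/
/-- `L(G)` is closed under inserting any word of `L(G)` at any position. -/
theorem InL.insert {α : Type*} {z : List α} (hz : InL z) :
    ∀ {w : List α}, InL w → ∀ u v, w = u ++ v → InL (u ++ z ++ v) := by
  intro w h
  induction h with
  | nil =>
      intro u v huv
      obtain ⟨rfl, rfl⟩ := List.append_eq_nil_iff.mp huv.symm
      simpa using hz
  | @append x y hx hy ihx ihy =>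
      intro u v huv
      rcases List.append_eq_append_iff.mp huv.symm with ⟨a, hx2, hv⟩ | ⟨a, hu, hy2⟩
      · subst hx2; subst hv
        simpa [List.append_assoc] using InL.append (ihx u a rfl) hy
      · subst hu; subst hy2
        simpa [List.append_assoc] using InL.append hx (ihy a v rfl)
  | @wrap2 c x hx ih =>
      intro u v huv
      cases u with
      | nil =>
          simp only [List.nil_append] at huv ⊢
          subst huv
          exact InL.append hz (InL.wrap2 c hx)
      | cons a u' =>
          have hc : a = c := by
            have := congrArg List.head? huv
            simpa using this.symm
          subst hc
          have huv' : x ++ [a] = u' ++ v := by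
            have := huv
            rw [List.append_assoc] at this
            exact (List.cons_inj_right a).mp (by simpa using this)
          rcases List.append_eq_append_iff.mp huv' with ⟨b, hu', hv⟩ | ⟨b, hx2, hv⟩
          · subst hu'
            cases b with
            | nil =>
                obtain rfl : v = [a] := by simpa using hv.symm
                simpa [List.append_assoc] using InL.wrap2 a (ih x [] (by simp))
            | cons d b' =>
                obtain ⟨rfl, rfl, rfl⟩ : a = d ∧ b' = [] ∧ v = [] := by
                  have h1 := hv
                  simp [List.cons_eq_cons, List.append_eq_nil_iff] at h1
                  tauto
                simpa [List.append_assoc] using InL.append (InL.wrap2 a hx) hz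
          · subst hv
            simpa [List.append_assoc] using InL.wrap2 a (ih u' b hx2)
  | @wrap3 c x y hx hy ihx ihy =>
      intro u v huv
      cases u with
      | nil =>
          simp only [List.nil_append] at huv ⊢
          subst huv
          exact InL.append hz (InL.wrap3 c hx hy)
      | cons a u' =>
          have hc : a = c := by
            have := congrArg List.head? huv
            simpa using this.symm
          subst hc
          have huv' : x ++ ([a] ++ y ++ [a]) = u' ++ v := by
            have := huv
            simp only [List.append_assoc] at this
            exact (List.cons_inj_right a).mp (by simpa [List.append_assoc] using this)
          rcases List.append_eq_append_iff.mp huv' with ⟨b, hu', hv⟩ | ⟨b, hx2, hv⟩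
          · subst hu'
            cases b with
            | nil =>
                obtain rfl : v = [a] ++ y ++ [a] := by simpa using hv.symm
                simpa [List.append_assoc] using InL.wrap3 a (ihx x [] (by simp)) hy
            | cons d b' =>
                obtain ⟨rfl, hb'⟩ : a = d ∧ y ++ [a] = b' ++ v := by
                  have h1 := hv
                  simp [List.append_assoc] at h1
                  tauto
                rcases List.append_eq_append_iff.mp hb' with ⟨e, hb'2, hv2⟩ | ⟨e, hy2, hv2⟩
                · subst hb'2
                  cases e with
                  | nil =>
                      obtain rfl : v = [a] := by simpa using hv2.symm
                      simpa [List.append_assoc] using InL.wrap3 a hx (ihy y [] (by simp))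
                  | cons f e' =>
                      obtain ⟨rfl, rfl, rfl⟩ : a = f ∧ e' = [] ∧ v = [] := by
                        have h1 := hv2
                        simp [List.cons_eq_cons, List.append_eq_nil_iff] at h1
                        tauto
                      simpa [List.append_assoc] using InL.append (InL.wrap3 a hx hy) hz
                · subst hv2
                  simpa [List.append_assoc] using InL.wrap3 a hx (ihy b' e hy2)
          · subst hv
            simpa [List.append_assoc] using InL.wrap3 a (ihx u' b hx2) hy

/-- Runs `c^m` with `m ≥ 2` are in `L(G)`. -/
lemma InL.repl {α : Type*} (c : α) : ∀ n : ℕ, InL (List.replicate (n + 2) c)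
  | 0 => by simpa [List.replicate] using InL.wrap2 c InL.nil
  | 1 => by simpa [List.replicate] using InL.wrap3 c InL.nil InL.nil
  | (n + 2) => by
      have h := InL.repl c n
      have h2 := InL.wrap2 c h
      have : ([c] ++ List.replicate (n + 2) c ++ [c]) = List.replicate (n + 2 + 2) c := by
        simp [List.replicate_succ, ← List.replicate_succ']
      rwa [this] at h2

/-- If `w` is a solvable one-row Clickomania puzzle then `w ∈ L(G)`. -/
theorem grammar_of_solvable {k : ℕ} (w : List (Fin k)) (hw : Solvable w) :
    InL w := by
  induction hw using Relation.ReflTransGen.head_induction_on with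
  | refl => exact InL.nil
  | head hmove _ ih =>
      obtain ⟨x, y, c, m, hm, -, -, rfl, rfl⟩ := hmove
      obtain ⟨n, rfl⟩ := Nat.exists_eq_add_of_le hm
      have hz : InL (List.replicate (2 + n) c) := by
        simpa [Nat.add_comm] using InL.repl c n
      exact InL.insert hz ih x y rfl
end

section
/- Every nonempty solvable one-row Clickomania puzzle w has an internal solution: if a is the first letter of w and b is the last letter of w, then there is a sequence of moves transforming w into a word of the form a^p·b^q with p ≥ 2 and q ≥ 2 when a ≠ b (which is then solved by removing these two runs in the last two moves, in either order), or into a word a^p with p ≥ 2 when a = b (which is then solved by one last move). In particular, the blocks originally at the leftmost and rightmost positions of w are removed only in the last two moves (or in the last move, if they have the same color). -/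
namespace ClickAux

variable {α : Type*}

lemma pad_getLast (s : ℕ) (a d : α) (x' : List α)
    (hx : x'.getLast? ≠ some d) (h : x' = [] → s = 0 ∨ d ≠ a) :
    (List.replicate s a ++ x').getLast? ≠ some d := by
  rcases eq_or_ne x' [] with rfl | hne
  · rw [List.append_nil, List.getLast?_replicate]
    rcases h rfl with rfl | hda
    · simp
    · split
      · simp
      · simp only [ne_eq, Option.some.injEq]
        exact fun hc => hda hc.symm
  · rw [List.getLast?_append_of_ne_nil _ hne]; exact hx

lemma pad_head (t : ℕ) (b d : α) (y' : List α)
    (hy : y'.head? ≠ some d) (h : y' = [] → t = 0 ∨ d ≠ b) :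
    (y' ++ List.replicate t b).head? ≠ some d := by
  rcases eq_or_ne y' [] with rfl | hne
  · rw [List.nil_append, List.head?_replicate]
    rcases h rfl with rfl | hdb
    · simp
    · split
      · simp
      · simp only [ne_eq, Option.some.injEq]
        exact fun hc => hdb hc.symm
  · rw [List.head?_append]
    rcases y' with _ | ⟨v, ys⟩
    · exact absurd rfl hne
    · simpa using hy

lemma ctx_move (a b d : α) (s t j : ℕ) (x' y' : List α)
    (hj : 2 ≤ j) (hx : x'.getLast? ≠ some d) (hy : y'.head? ≠ some d)
    (hda : x' = [] → s = 0 ∨ d ≠ a) (hdb : y' = [] → t = 0 ∨ d ≠ b) :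
    ClickMove (List.replicate s a ++ (x' ++ List.replicate j d ++ y') ++ List.replicate t b)
      (List.replicate s a ++ (x' ++ y') ++ List.replicate t b) :=
  ⟨List.replicate s a ++ x', y' ++ List.replicate t b, d, j, hj,
    pad_getLast s a d x' hx hda, pad_head t b d y' hy hdb,
    by simp [List.append_assoc], by simp [List.append_assoc]⟩

/-- Two-sided padding lemma, for the case `a ≠ b`. -/
lemma padG (a b : α) (hab : a ≠ b) {u : List α}
    (hu : Relation.ReflTransGen ClickMove u []) :
    ∀ s t : ℕ,
      (s = 0 → u ≠ [] ∧ u.head? = some a) → (s ≠ 0 → 2 ≤ s) →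
      (t = 0 → u ≠ [] ∧ u.getLast? = some b) → (t ≠ 0 → 2 ≤ t) →
      ∃ s' t', 2 ≤ s' ∧ 2 ≤ t' ∧
        Relation.ReflTransGen ClickMove
          (List.replicate s a ++ u ++ List.replicate t b)
          (List.replicate s' a ++ List.replicate t' b) := by
  induction hu using Relation.ReflTransGen.head_induction_on with
  | refl =>
    intro s t hs0 hs2 ht0 ht2
    have hs : s ≠ 0 := fun h => (hs0 h).1 rfl
    have ht : t ≠ 0 := fun h => (ht0 h).1 rfl
    exact ⟨s, t, hs2 hs, ht2 ht, by rw [List.append_nil]⟩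
  | head hstep hrest ih =>
    obtain ⟨x', y', d, j, hj, hx, hy, hu_eq, hu'_eq⟩ := hstep
    subst hu_eq; subst hu'_eq
    have hjne : j ≠ 0 := by omega
    have hrep : List.replicate j d ≠ [] := by
      simp only [ne_eq, List.replicate_eq_nil_iff]; exact hjne
    intro s t hs0 hs2 ht0 ht2
    by_cases hc1 : x' = [] ∧ d = a
    · obtain ⟨rfl, hd⟩ := hc1
      subst hd
      simp only [List.nil_append] at ih hs0 ht0 ⊢
      have key : List.replicate s d ++ (List.replicate j d ++ y') ++ List.replicate t b
          = List.replicate (s + j) d ++ y' ++ List.replicate t b := by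
        rw [List.replicate_add]; simp only [List.append_assoc]
      rw [key]
      apply ih (s + j) t
      · intro h; exact absurd h (by omega)
      · intro _; omega
      · intro ht
        obtain ⟨_, hlast⟩ := ht0 ht
        have hy'ne : y' ≠ [] := by
          rintro rfl
          rw [List.append_nil, List.getLast?_replicate] at hlast
          simp only [if_neg hjne, Option.some.injEq] at hlast
          exact hab hlast
        refine ⟨hy'ne, ?_⟩
        rwa [List.getLast?_append_of_ne_nil _ hy'ne] at hlast
      · exact ht2
    · by_cases hc2 : y' = [] ∧ d = b
      · obtain ⟨rfl, hd⟩ := hc2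
        subst hd
        simp only [List.append_nil] at ih hs0 ht0 ⊢
        have key : List.replicate s a ++ (x' ++ List.replicate j d) ++ List.replicate t d
            = List.replicate s a ++ x' ++ List.replicate (j + t) d := by
          rw [List.replicate_add]; simp only [List.append_assoc]
        rw [key]
        apply ih s (j + t)
        · intro hs
          obtain ⟨_, hhead⟩ := hs0 hs
          have hx'ne : x' ≠ [] := by
            rintro rfl
            rw [List.nil_append, List.head?_replicate] at hhead
            simp only [if_neg hjne, Option.some.injEq] at hhead
            exact hab hhead.symm
          refine ⟨hx'ne, ?_⟩
          rcases x' with _ | ⟨v, xs⟩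
          · exact absurd rfl hx'ne
          · simp only [List.cons_append, List.head?_cons] at hhead ⊢
            exact hhead
        · exact hs2
        · intro h; exact absurd h (by omega)
        · intro _; omega
      · have hda : x' = [] → s = 0 ∨ d ≠ a :=
          fun h => Or.inr fun hd => hc1 ⟨h, hd⟩
        have hdb : y' = [] → t = 0 ∨ d ≠ b :=
          fun h => Or.inr fun hd => hc2 ⟨h, hd⟩
        have hmv := ctx_move a b d s t j x' y' hj hx hy hda hdb
        obtain ⟨s', t', h2s, h2t, hred⟩ := ih s t
          (by
            intro hs
            obtain ⟨_, hhead⟩ := hs0 hs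
            have hx'ne : x' ≠ [] := by
              rintro rfl
              rw [List.nil_append, List.head?_append, List.head?_replicate] at hhead
              simp only [if_neg hjne, Option.or_some, Option.some_or, Option.some.injEq] at hhead
              exact hc1 ⟨rfl, hhead⟩
            refine ⟨fun hc => hx'ne (List.append_eq_nil_iff.mp hc).1, ?_⟩
            rcases x' with _ | ⟨v, xs⟩
            · exact absurd rfl hx'ne
            · simp only [List.cons_append, List.head?_cons] at hhead ⊢
              exact hhead)
          hs2
          (by
            intro ht
            obtain ⟨_, hlast⟩ := ht0 ht
            have hy'ne : y' ≠ [] := by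
              rintro rfl
              rw [List.append_nil, List.getLast?_append_of_ne_nil _ hrep,
                List.getLast?_replicate] at hlast
              simp only [if_neg hjne, Option.some.injEq] at hlast
              exact hc2 ⟨rfl, hlast⟩
            refine ⟨fun hc => hy'ne (List.append_eq_nil_iff.mp hc).2, ?_⟩
            rw [List.getLast?_append_of_ne_nil _ hy'ne] at hlast
            rwa [List.getLast?_append_of_ne_nil _ hy'ne])
          ht2
        exact ⟨s', t', h2s, h2t, Relation.ReflTransGen.head hmv hred⟩

/-- One-sided padding lemma, for the case `a = b`. -/
lemma padH (a : α) {u : List α}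
    (hu : Relation.ReflTransGen ClickMove u []) :
    ∀ s : ℕ,
      (s = 0 → u ≠ [] ∧ u.head? = some a) → (s ≠ 0 → 2 ≤ s) →
      ∃ p, 2 ≤ p ∧
        Relation.ReflTransGen ClickMove
          (List.replicate s a ++ u) (List.replicate p a) := by
  induction hu using Relation.ReflTransGen.head_induction_on with
  | refl =>
    intro s hs0 hs2
    have hs : s ≠ 0 := fun h => (hs0 h).1 rfl
    exact ⟨s, hs2 hs, by rw [List.append_nil]⟩
  | head hstep hrest ih =>
    obtain ⟨x', y', d, j, hj, hx, hy, hu_eq, hu'_eq⟩ := hstep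
    subst hu_eq; subst hu'_eq
    have hjne : j ≠ 0 := by omega
    intro s hs0 hs2
    by_cases hc1 : x' = [] ∧ d = a
    · obtain ⟨rfl, hd⟩ := hc1
      subst hd
      simp only [List.nil_append] at ih hs0 ⊢
      have key : List.replicate s d ++ (List.replicate j d ++ y')
          = List.replicate (s + j) d ++ y' := by
        rw [List.replicate_add]; simp only [List.append_assoc]
      rw [key]
      apply ih (s + j)
      · intro h; exact absurd h (by omega)
      · intro _; omega
    · have hda : x' = [] → s = 0 ∨ d ≠ a :=
        fun h => Or.inr fun hd => hc1 ⟨h, hd⟩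
      have hmv := ctx_move a a d s 0 j x' y' hj hx hy hda (fun _ => Or.inl rfl)
      rw [List.replicate_zero, List.append_nil, List.append_nil] at hmv
      obtain ⟨p, h2p, hred⟩ := ih s
        (by
          intro hs
          obtain ⟨_, hhead⟩ := hs0 hs
          have hx'ne : x' ≠ [] := by
            rintro rfl
            rw [List.nil_append, List.head?_append, List.head?_replicate] at hhead
            simp only [if_neg hjne, Option.or_some, Option.some_or, Option.some.injEq] at hhead
            exact hc1 ⟨rfl, hhead⟩
          refine ⟨fun hc => hx'ne (List.append_eq_nil_iff.mp hc).1, ?_⟩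
          rcases x' with _ | ⟨v, xs⟩
          · exact absurd rfl hx'ne
          · simp only [List.cons_append, List.head?_cons] at hhead ⊢
            exact hhead)
        hs2
      exact ⟨p, h2p, Relation.ReflTransGen.head hmv hred⟩

end ClickAux

/-- Every nonempty solvable one-row Clickomania puzzle has an internal solution:
letting `a` be its first letter and `b` its last letter, some sequence of moves
transforms `w` into `a^p · b^q` with `p, q ≥ 2` (when `a ≠ b`), which is then solved
by two final moves, or into `a^p` with `p ≥ 2` (when `a = b`), which is then solved
by one final move.  In particular the original leftmost and rightmost blocks are
removed only in the last two moves (or the last move if they share a color). -/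
theorem exists_internal_solution {k : ℕ} (w : List (Fin k)) (hw : w ≠ [])
    (hs : Solvable w) (a b : Fin k)
    (ha : w.head? = some a) (hb : w.getLast? = some b) :
    (a ≠ b → ∃ p q : ℕ, 2 ≤ p ∧ 2 ≤ q ∧
      Relation.ReflTransGen ClickMove w
        (List.replicate p a ++ List.replicate q b)) ∧
    (a = b → ∃ p : ℕ, 2 ≤ p ∧
      Relation.ReflTransGen ClickMove w (List.replicate p a)) := by
  constructor
  · intro hab
    obtain ⟨s', t', h1, h2, hred⟩ := ClickAux.padG a b hab hs 0 0
      (fun _ => ⟨hw, ha⟩) (fun h => absurd rfl h)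
      (fun _ => ⟨hw, hb⟩) (fun h => absurd rfl h)
    exact ⟨s', t', h1, h2, by simpa using hred⟩
  · intro hab
    subst hab
    obtain ⟨p, hp, hred⟩ := ClickAux.padH a hs 0
      (fun _ => ⟨hw, ha⟩) (fun h => absurd rfl h)
    exact ⟨p, hp, by simpa using hred⟩
end

section
/- If x and y are solvable one-row Clickomania puzzles over the same alphabet, then their concatenation x·y is solvable. -/
lemma solvable_append_run {α : Type*} {x : List α} (hx : Solvable x) (c : α) {m : ℕ}
    (hm : 2 ≤ m) : Solvable (x ++ List.replicate m c) := by
  induction hx using Relation.ReflTransGen.head_induction_on with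
  | refl =>
    refine Relation.ReflTransGen.single ⟨[], [], c, m, hm, by simp, by simp, by simp, by simp⟩
  | head h h' ih =>
    obtain ⟨a, b, d, p, hp, ha, hb, hw, hw'⟩ := h
    subst hw hw'
    by_cases hbd : b = [] ∧ d = c
    · obtain ⟨rfl, hdc⟩ := hbd
      subst hdc
      refine Relation.ReflTransGen.head ⟨a, [], d, p + m, by omega, ha, by simp, ?_, by simp⟩ h'
      simp only [List.append_nil, List.replicate_add, List.append_assoc]
    · have hhd : (b ++ List.replicate m c).head? ≠ some d := by
        rcases eq_or_ne b [] with rfl | hbne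
        · have hdc : d ≠ c := fun hdc => hbd ⟨rfl, hdc⟩
          have hm0 : m ≠ 0 := by omega
          rw [List.nil_append, List.head?_replicate, if_neg hm0]
          exact fun h => hdc (Option.some.inj h).symm
        · rw [List.head?_append_of_ne_nil _ hbne]; exact hb
      have hmv : ClickMove (a ++ List.replicate p d ++ b ++ List.replicate m c)
          (a ++ b ++ List.replicate m c) :=
        ⟨a, b ++ List.replicate m c, d, p, hp, ha, hhd, by simp, by simp⟩
      exact Relation.ReflTransGen.head hmv ih

lemma solvable_append_aux {α : Type*} {y : List α} (hy : Solvable y) :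
    ∀ x : List α, Solvable x → Solvable (x ++ y) := by
  induction hy using Relation.ReflTransGen.head_induction_on with
  | refl => intro x hx; simpa using hx
  | head h h' ih =>
    obtain ⟨a, b, c, m, hm, ha, hb, hw, hw'⟩ := h
    subst hw hw'
    intro x hx
    rcases eq_or_ne a [] with rfl | hane
    · have := ih (x ++ List.replicate m c) (solvable_append_run hx c hm)
      simpa [List.append_assoc] using this
    · refine Relation.ReflTransGen.head
        ⟨x ++ a, b, c, m, hm, ?_, hb, by simp, by simp⟩ (ih x hx)
      rw [List.getLast?_append_of_ne_nil _ hane]; exact ha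

/-- If `x` and `y` are solvable one-row Clickomania puzzles over the same
alphabet, then their concatenation `x ++ y` is solvable. -/
theorem solvable_append {k : ℕ} (x y : List (Fin k))
    (hx : Solvable x) (hy : Solvable y) :
    Solvable (x ++ y) := by
  exact solvable_append_aux hy x hx
end

section
/- If x and y are solvable one-row Clickomania puzzles over the alphabet {c_1, …, c_k}, then for every color c_i the word c_i·x·c_i·y·c_i is solvable. -/
namespace Wrap3Aux

variable {α : Type*}

/-- Solvable in exactly `n` moves. -/
def SolvN : ℕ → List α → Prop
  | 0, w => w = []
  | n+1, w => ∃ w', ClickMove w w' ∧ SolvN n w'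

lemma solvable_of_solvN : ∀ {n : ℕ} {w : List α}, SolvN n w → Solvable w
  | 0, w, h => by rw [show w = [] from h]; exact Relation.ReflTransGen.refl
  | n+1, w, ⟨w', hm, hs⟩ => Relation.ReflTransGen.head hm (solvable_of_solvN hs)

lemma exists_solvN {w : List α} (h : Solvable w) : ∃ n, SolvN n w := by
  induction h using Relation.ReflTransGen.head_induction_on with
  | refl => exact ⟨0, rfl⟩
  | head hstep _ ih =>
    obtain ⟨n, hn⟩ := ih
    exact ⟨n+1, _, hstep, hn⟩

lemma solvN_nil_eq : ∀ {n : ℕ}, SolvN n ([] : List α) → n = 0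
  | 0, _ => rfl
  | n+1, ⟨w', ⟨x, y, d, m, hm, _, _, hw, _⟩, _⟩ => by
    have := congrArg List.length hw
    simp at this
    omega

lemma solvable_replicate {a : ℕ} {c : α} (h : 2 ≤ a) :
    Solvable (List.replicate a c) := by
  have hmv : ClickMove (List.replicate a c) [] :=
    ⟨[], [], c, a, h, by simp, by simp, by simp, rfl⟩
  exact Relation.ReflTransGen.head hmv Relation.ReflTransGen.refl

lemma getLast?_replicate_pos {a : ℕ} {c : α} (h : 1 ≤ a) :
    (List.replicate a c).getLast? = some c := by
  obtain ⟨b, rfl⟩ : ∃ b, a = b + 1 := ⟨a - 1, by omega⟩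
  rw [List.replicate_succ', List.getLast?_append_of_ne_nil _ (by simp)]
  rfl

lemma head?_replicate_pos {a : ℕ} {c : α} (h : 1 ≤ a) :
    (List.replicate a c).head? = some c := by
  obtain ⟨b, rfl⟩ : ∃ b, a = b + 1 := ⟨a - 1, by omega⟩
  rw [List.replicate_succ]
  rfl

/-- `pat c ps a = c^{a₁} x₁ c^{a₂} x₂ ⋯ c^a` where `ps = [(a₁,n₁,x₁),…]`. -/
def pat (c : α) : List (ℕ × ℕ × List α) → ℕ → List α
  | [], a => List.replicate a c
  | p :: ps, a => List.replicate p.1 c ++ p.2.2 ++ pat c ps a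

@[simp] lemma pat_nil (c : α) (a : ℕ) : pat c [] a = List.replicate a c := rfl
@[simp] lemma pat_cons (c : α) (p : ℕ × ℕ × List α) (ps : List (ℕ × ℕ × List α)) (a : ℕ) :
    pat c (p :: ps) a = List.replicate p.1 c ++ p.2.2 ++ pat c ps a := rfl

lemma head?_pat {c : α} {ps : List (ℕ × ℕ × List α)} {a : ℕ}
    (hps : ∀ p ∈ ps, 1 ≤ p.1) (ha : 1 ≤ a) :
    (pat c ps a).head? = some c := by
  cases ps with
  | nil => exact head?_replicate_pos ha
  | cons p ps =>
    have h1 : 1 ≤ p.1 := hps p (List.mem_cons_self)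
    rw [pat_cons, List.append_assoc,
      List.head?_append_of_ne_nil _ (by simp; omega),
      head?_replicate_pos h1]

lemma key (c : α) (M : ℕ) : ∀ (ps : List (ℕ × ℕ × List α)) (a : ℕ),
    2 * (ps.map (fun p => p.2.1)).sum + ps.length ≤ M →
    (∀ p ∈ ps, 1 ≤ p.1 ∧ SolvN p.2.1 p.2.2) →
    1 ≤ a → 2 ≤ a + ps.length →
    Solvable (pat c ps a) := by
  induction M with
  | zero =>
    intro ps a hM hps ha hsum
    have hpse : ps = [] := List.length_eq_zero_iff.1 (by omega)
    subst hpse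
    exact solvable_replicate (by simpa using hsum)
  | succ M ih =>
    intro ps a hM hps ha hsum
    match ps with
    | [] => exact solvable_replicate (by simpa using hsum)
    | ⟨a1, n1, x1⟩ :: rest =>
      obtain ⟨ha1, hn1⟩ := hps _ (List.mem_cons_self)
      simp only [List.map_cons, List.sum_cons, List.length_cons] at hM hsum
      have hrest : ∀ p ∈ rest, 1 ≤ p.1 ∧ SolvN p.2.1 p.2.2 :=
        fun p hp => hps p (List.mem_cons_of_mem _ hp)
      by_cases hx1 : x1 = []
      · -- drop the empty word, merging the two adjacent blocks
        subst hx1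
        have hn10 : n1 = 0 := solvN_nil_eq hn1
        subst hn10
        match rest with
        | [] =>
          have heq : pat c [(a1, 0, ([] : List α))] a = pat c [] (a1 + a) := by
            simp only [pat_cons, pat_nil, List.append_nil]
            rw [List.replicate_add]
          rw [heq]
          exact ih [] (a1 + a) (by simp) (by simp) (by omega) (by simp; omega)
        | ⟨a2, n2, x2⟩ :: r2 =>
          have ha2 := (hrest _ (List.mem_cons_self)).1
          have heq : pat c ((a1, 0, ([] : List α)) :: (a2, n2, x2) :: r2) a
              = pat c ((a1 + a2, n2, x2) :: r2) a := by
            simp only [pat_cons, List.append_nil]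
            rw [List.replicate_add]
            simp only [List.append_assoc]
          rw [heq]
          refine ih _ a ?_ ?_ ha ?_
          · simp only [List.map_cons, List.sum_cons, List.length_cons] at hM ⊢
            omega
          · intro p hp
            rcases List.mem_cons.1 hp with h | h
            · subst h
              refine ⟨by omega, (hrest _ (List.mem_cons_self)).2⟩
            · exact hrest _ (List.mem_cons_of_mem _ h)
          · simp only [List.length_cons] at hsum ⊢
            omega
      · -- x1 is nonempty, so n1 = n' + 1 and x1 has a first move
        match n1, hn1 with
        | 0, hn1 => exact absurd hn1 hx1
        | n' + 1, hn1 =>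
          obtain ⟨w', ⟨u, v, d, t, ht, hu, hv, hx1eq, hw'⟩, hw's⟩ := hn1
          subst hw'
          subst hx1eq
          by_cases hdc : c = d
          · subst hdc
            by_cases huu : u = []
            · -- run touches the left block: absorb it there
              subst huu
              have heq : pat c ((a1, n' + 1, [] ++ List.replicate t c ++ v) :: rest) a
                  = pat c ((a1 + t, n', v) :: rest) a := by
                simp only [pat_cons, List.nil_append]
                rw [List.replicate_add]
                simp only [List.append_assoc]
              rw [heq]
              refine ih _ a ?_ ?_ ha (by simpa using hsum)
              · simp only [List.map_cons, List.sum_cons, List.length_cons]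
                omega
              · intro p hp
                rcases List.mem_cons.1 hp with h | h
                · subst h
                  exact ⟨by omega, by simpa using hw's⟩
                · exact hrest _ h
            · by_cases hvv : v = []
              · -- run touches the right block: absorb it there
                subst hvv
                match rest with
                | [] =>
                  have heq : pat c [(a1, n' + 1, u ++ List.replicate t c ++ [])] a
                      = pat c [(a1, n', u)] (t + a) := by
                    simp only [pat_cons, pat_nil, List.append_nil]
                    rw [List.replicate_add]
                    simp only [List.append_assoc]
                  rw [heq]
                  refine ih _ (t + a) ?_ ?_ (by omega) ?_
                  · simp only [List.map_cons, List.sum_cons, List.map_nil,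
                      List.sum_nil, List.length_cons, List.length_nil]
                    omega
                  · intro p hp
                    rcases List.mem_cons.1 hp with h | h
                    · subst h
                      exact ⟨ha1, by simpa using hw's⟩
                    · simp at h
                  · simp only [List.length_cons, List.length_nil]
                    omega
                | ⟨a2, n2, x2⟩ :: r2 =>
                  have heq : pat c ((a1, n' + 1, u ++ List.replicate t c ++ []) :: (a2, n2, x2) :: r2) a
                      = pat c ((a1, n', u) :: (t + a2, n2, x2) :: r2) a := by
                    simp only [pat_cons, List.append_nil]
                    rw [List.replicate_add]
                    simp only [List.append_assoc]
                  rw [heq]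
                  refine ih _ a ?_ ?_ ha ?_
                  · simp only [List.map_cons, List.sum_cons, List.length_cons] at hM ⊢
                    omega
                  · intro p hp
                    rcases List.mem_cons.1 hp with h | h
                    · subst h
                      exact ⟨ha1, by simpa using hw's⟩
                    · rcases List.mem_cons.1 h with h2 | h2
                      · subst h2
                        have := hrest _ (List.mem_cons_self)
                        exact ⟨by omega, this.2⟩
                      · exact hrest _ (List.mem_cons_of_mem _ h2)
                  · simp only [List.length_cons] at hsum ⊢
                    omega
              · -- interior run of color c: play the move
                have hmv : ClickMove (pat c ((a1, n' + 1, u ++ List.replicate t c ++ v) :: rest) a)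
                    (pat c ((a1, n', u ++ v) :: rest) a) := by
                  refine ⟨List.replicate a1 c ++ u, v ++ pat c rest a, c, t, ht, ?_, ?_, ?_, ?_⟩
                  · rw [List.getLast?_append_of_ne_nil _ huu]; exact hu
                  · rw [List.head?_append_of_ne_nil _ hvv]; exact hv
                  · simp [List.append_assoc]
                  · simp [List.append_assoc]
                refine Relation.ReflTransGen.head hmv ?_
                refine ih _ a ?_ ?_ ha (by simpa using hsum)
                · simp only [List.map_cons, List.sum_cons, List.length_cons]
                  omega
                · intro p hp
                  rcases List.mem_cons.1 hp with h | h
                  · subst h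
                    exact ⟨ha1, hw's⟩
                  · exact hrest _ h
          · -- a run of a different color: play the move
            have hmv : ClickMove (pat c ((a1, n' + 1, u ++ List.replicate t d ++ v) :: rest) a)
                (pat c ((a1, n', u ++ v) :: rest) a) := by
              refine ⟨List.replicate a1 c ++ u, v ++ pat c rest a, d, t, ht, ?_, ?_, ?_, ?_⟩
              · rcases eq_or_ne u [] with rfl | hune
                · rw [List.append_nil, getLast?_replicate_pos ha1]
                  simp [hdc]
                · rw [List.getLast?_append_of_ne_nil _ hune]; exact hu
              · rcases eq_or_ne v [] with rfl | hvne
                · rw [List.nil_append, head?_pat (fun p hp => (hrest p hp).1) ha]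
                  simp [hdc]
                · rw [List.head?_append_of_ne_nil _ hvne]; exact hv
              · simp [List.append_assoc]
              · simp [List.append_assoc]
            refine Relation.ReflTransGen.head hmv ?_
            refine ih _ a ?_ ?_ ha (by simpa using hsum)
            · simp only [List.map_cons, List.sum_cons, List.length_cons]
              omega
            · intro p hp
              rcases List.mem_cons.1 hp with h | h
              · subst h
                exact ⟨ha1, hw's⟩
              · exact hrest _ h

end Wrap3Aux

/-- If `x` and `y` are solvable one-row Clickomania puzzles, then for every
color `c` the word `c · x · c · y · c` is solvable. -/
theorem solvable_wrap3 {k : ℕ} (x y : List (Fin k))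
    (hx : Solvable x) (hy : Solvable y) (c : Fin k) :
    Solvable ([c] ++ x ++ [c] ++ y ++ [c]) := by
  obtain ⟨nx, hnx⟩ := Wrap3Aux.exists_solvN hx
  obtain ⟨ny, hny⟩ := Wrap3Aux.exists_solvN hy
  have heq : [c] ++ x ++ [c] ++ y ++ [c]
      = Wrap3Aux.pat c [(1, nx, x), (1, ny, y)] 1 := by
    simp [Wrap3Aux.pat, List.replicate, List.append_assoc]
  rw [heq]
  refine Wrap3Aux.key c (2 * (nx + ny) + 2) _ 1 ?_ ?_ (by omega) (by simp)
  · simp only [List.map_cons, List.sum_cons, List.map_nil, List.sum_nil, List.length_cons,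
      List.length_nil]
    omega
  · intro p hp
    rcases List.mem_cons.1 hp with h | h
    · subst h; exact ⟨le_refl 1, hnx⟩
    · rcases List.mem_cons.1 h with h2 | h2
      · subst h2; exact ⟨le_refl 1, hny⟩
      · simp at h2
end

section
/- A one-row Clickomania puzzle w is solvable if and only if the word obtained from w by replacing every maximal run of equal letters of length greater than 2 by a run of the same letter of length exactly 2 is solvable. (Thus a group with more than 2 blocks is equivalent to a group with just 2 blocks.) -/
/-- The word obtained from a list of groups (letter, size): the concatenation
of the monochromatic runs. -/
def wordOf {α : Type*} (gs : List (α × ℕ)) : List α :=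
  (gs.map fun g => List.replicate g.2 g.1).flatten

/-- `gs` is a valid list of groups: every group is nonempty and
consecutive groups have different letters (so the groups are exactly the
maximal runs of `wordOf gs`). -/
def IsGroups {α : Type*} (gs : List (α × ℕ)) : Prop :=
  (∀ g ∈ gs, 1 ≤ g.2) ∧ List.Chain' (fun a b => a.1 ≠ b.1) gs

namespace Click

variable {α : Type*}

def cap (gs : List (α × ℕ)) : List (α × ℕ) := gs.map fun g => (g.1, min g.2 2)

lemma wordOf_nil : wordOf ([] : List (α × ℕ)) = [] := rfl

lemma wordOf_cons (g : α × ℕ) (p : List (α × ℕ)) :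
    wordOf (g :: p) = List.replicate g.2 g.1 ++ wordOf p := by
  simp [wordOf]

lemma wordOf_append (p q : List (α × ℕ)) : wordOf (p ++ q) = wordOf p ++ wordOf q := by
  simp [wordOf]

lemma head?_wordOf (gs : List (α × ℕ)) (h : ∀ g ∈ gs, 1 ≤ g.2) :
    (wordOf gs).head? = gs.head?.map Prod.fst := by
  cases gs with
  | nil => rfl
  | cons g rest =>
    have h1 : 1 ≤ g.2 := h g (by simp)
    rw [wordOf_cons]
    obtain ⟨c, n⟩ := g
    cases n with
    | zero => omega
    | succ n => simp [List.replicate_succ]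

lemma reverse_wordOf (gs : List (α × ℕ)) : (wordOf gs).reverse = wordOf gs.reverse := by
  simp only [wordOf, List.reverse_flatten, List.map_map, List.map_reverse]
  congr 1
  congr 1
  apply List.map_congr_left
  intro g _
  simp

lemma getLast?_wordOf (gs : List (α × ℕ)) (h : ∀ g ∈ gs, 1 ≤ g.2) :
    (wordOf gs).getLast? = gs.getLast?.map Prod.fst := by
  rw [List.getLast?_eq_head?_reverse, reverse_wordOf, head?_wordOf _ (by simpa using h),
    List.head?_reverse]

lemma wordOf_eq_nil (gs : List (α × ℕ)) (h : ∀ g ∈ gs, 1 ≤ g.2)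
    (hw : wordOf gs = []) : gs = [] := by
  cases gs with
  | nil => rfl
  | cons g rest =>
    exfalso
    have h1 : 1 ≤ g.2 := h g (by simp)
    rw [wordOf_cons] at hw
    rcases List.append_eq_nil_iff.1 hw with ⟨h2, -⟩
    have := List.length_replicate (n := g.2) (a := g.1)
    rw [h2] at this
    simp at this
    omega

lemma repl_cancel (c : α) : ∀ (n m : ℕ) (a b : List α), a.head? ≠ some c → b.head? ≠ some c →
    List.replicate n c ++ a = List.replicate m c ++ b → n = m ∧ a = b := by
  intro n
  induction n with
  | zero =>
    intro m a b ha hb h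
    cases m with
    | zero => simpa using h
    | succ m =>
      exfalso
      rw [List.replicate_succ] at h
      simp at h
      apply ha
      rw [h]
      rfl
  | succ n ih =>
    intro m a b ha hb h
    cases m with
    | zero =>
      exfalso
      rw [List.replicate_succ] at h
      simp at h
      apply hb
      rw [← h]
      rfl
    | succ m =>
      rw [List.replicate_succ, List.replicate_succ] at h
      simp only [List.cons_append, List.cons.injEq] at h
      obtain ⟨h1, h2⟩ := ih m a b ha hb h.2
      exact ⟨by omega, h2⟩


lemma parse (c : α) (m : ℕ) (hm : 2 ≤ m) :
    ∀ (x : List α) (gs : List (α × ℕ)) (y : List α), IsGroups gs →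
    x.getLast? ≠ some c → y.head? ≠ some c →
    wordOf gs = x ++ List.replicate m c ++ y →
    ∃ p q, gs = p ++ (c, m) :: q ∧ x = wordOf p ∧ y = wordOf q := by
  intro x
  induction x with
  | nil =>
    intro gs y hg hx hy heq
    cases gs with
    | nil =>
      exfalso
      have : (wordOf ([] : List (α × ℕ))).length = ([] ++ List.replicate m c ++ y).length := by
        rw [heq]
      simp [wordOf_nil] at this
      omega
    | cons g rest =>
      obtain ⟨hsz, hch⟩ := hg
      have h1 : 1 ≤ g.2 := hsz g (by simp)
      rw [wordOf_cons] at heq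
      simp only [List.nil_append] at heq
      -- g.1 = c
      have hgc : g.1 = c := by
        have := congrArg List.head? heq
        obtain ⟨c0, n⟩ := g
        cases n with
        | zero => omega
        | succ n =>
          cases m with
          | zero => omega
          | succ m' =>
            simp [List.replicate_succ] at this
            exact this
      -- (wordOf rest).head? ≠ some c
      have hrest : (wordOf rest).head? ≠ some c := by
        rw [head?_wordOf rest (fun g hg => hsz g (by simp [hg]))]
        cases rest with
        | nil => simp
        | cons g' r' =>
          have : g.1 ≠ g'.1 := (List.isChain_cons.1 hch).1 g' (by simp)
          simp
          rw [← hgc]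
          exact fun h => this h.symm
      subst hgc
      obtain ⟨hnm, hwy⟩ := repl_cancel g.1 g.2 m (wordOf rest) y hrest hy heq
      refine ⟨[], rest, ?_, rfl, hwy.symm⟩
      have hg2 : g = (g.1, m) := by
        obtain ⟨a, b⟩ := g; simpa using hnm
      rw [List.nil_append, ← hg2]
  | cons e x' ih =>
    intro gs y hg hx hy heq
    cases gs with
    | nil =>
      exfalso
      have := congrArg List.length heq
      simp [wordOf_nil] at this
    | cons g rest =>
      obtain ⟨hsz, hch⟩ := hg
      have h1 : 1 ≤ g.2 := hsz g (by simp)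
      obtain ⟨c0, n⟩ := g
      cases n with
      | zero => omega
      | succ n' =>
        rw [wordOf_cons] at heq
        simp only [List.replicate_succ, List.cons_append, List.cons.injEq] at heq
        obtain ⟨hec, heq'⟩ := heq
        subst hec
        have hx' : x'.getLast? ≠ some c := by
          cases x' with
          | nil => simp
          | cons a t => rw [← List.getLast?_cons_cons]; exact hx
        cases n' with
        | zero =>
          -- group size 1
          have hrg : IsGroups rest := ⟨fun g hg => hsz g (by simp [hg]), (List.isChain_cons.1 hch).2⟩
          simp only [List.replicate_zero, List.nil_append] at heq'
          obtain ⟨p, q, hsplit, hxp, hyq⟩ := ih rest y hrg hx' hy heq'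
          refine ⟨(c0, 1) :: p, q, by simp [hsplit], ?_, hyq⟩
          rw [wordOf_cons, hxp]
          simp [List.replicate_succ]
        | succ n'' =>
          have hrg : IsGroups ((c0, n'' + 1) :: rest) := by
            constructor
            · intro g hg
              rcases List.mem_cons.1 hg with h | h
              · subst h; simp
              · exact hsz g (by simp [h])
            · rw [List.Chain', List.isChain_cons] at hch ⊢
              exact ⟨hch.1, hch.2⟩
          have heq'' : wordOf ((c0, n'' + 1) :: rest) = x' ++ List.replicate m c ++ y := by
            rw [wordOf_cons]; exact heq'
          obtain ⟨p, q, hsplit, hxp, hyq⟩ := ih ((c0, n'' + 1) :: rest) y hrg hx' hy heq''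
          cases p with
          | nil =>
            exfalso
            simp at hsplit
            rw [hxp] at hx
            have : c0 = c := hsplit.1.1
            subst this
            simp [wordOf_nil] at hx
          | cons g0 p' =>
            simp only [List.cons_append, List.cons.injEq] at hsplit
            obtain ⟨hg0, hrest'⟩ := hsplit
            refine ⟨(c0, n'' + 2) :: p', q, by simp [hrest'], ?_, hyq⟩
            rw [wordOf_cons]
            simp only []
            rw [hxp, ← hg0, wordOf_cons]
            simp [List.replicate_succ]

variable [DecidableEq α]

def glue : List (α × ℕ) → List (α × ℕ) → List (α × ℕ)
  | [], q => q
  | [g], q =>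
    match q with
    | [] => [g]
    | h :: q' => if g.1 = h.1 then (g.1, g.2 + h.2) :: q' else g :: h :: q'
  | g :: g' :: p, q => g :: glue (g' :: p) q

lemma wordOf_glue : ∀ (p q : List (α × ℕ)), wordOf (glue p q) = wordOf p ++ wordOf q := by
  intro p
  induction p with
  | nil => intro q; simp [glue, wordOf_nil]
  | cons g p ih =>
    intro q
    cases p with
    | nil =>
      cases q with
      | nil => simp [glue, wordOf_cons, wordOf_nil]
      | cons h q' =>
        by_cases hgh : g.1 = h.1
        · simp only [glue, if_pos hgh, wordOf_cons, wordOf_nil, List.append_nil]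
          rw [List.replicate_add, hgh, List.append_assoc]
        · simp only [glue, if_neg hgh, wordOf_cons]
          simp [wordOf_nil]
    | cons g' p' =>
      simp only [glue, wordOf_cons]
      rw [ih, wordOf_cons]
      simp [List.append_assoc]

lemma head?_glue_fst : ∀ (g : α × ℕ) (p q : List (α × ℕ)),
    ∃ k, (glue (g :: p) q).head? = some (g.1, k) := by
  intro g p q
  cases p with
  | nil =>
    cases q with
    | nil => exact ⟨g.2, rfl⟩
    | cons h q' =>
      by_cases hgh : g.1 = h.1
      · exact ⟨g.2 + h.2, by simp [glue, if_pos hgh]⟩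
      · exact ⟨g.2, by simp [glue, if_neg hgh]⟩
  | cons g' p' => exact ⟨g.2, by simp [glue]⟩

lemma glue_sizes : ∀ (p q : List (α × ℕ)), (∀ g ∈ p, 1 ≤ g.2) → (∀ g ∈ q, 1 ≤ g.2) →
    ∀ g ∈ glue p q, 1 ≤ g.2 := by
  intro p
  induction p with
  | nil => intro q _ hq; simpa [glue] using hq
  | cons g p ih =>
    intro q hp hq
    cases p with
    | nil =>
      cases q with
      | nil => simpa [glue] using hp
      | cons h q' =>
        by_cases hgh : g.1 = h.1
        · simp only [glue, if_pos hgh]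
          intro a ha
          rcases List.mem_cons.1 ha with rfl | h'
          · have := hq h (by simp); simp; omega
          · exact hq a (by simp [h'])
        · simp only [glue, if_neg hgh]
          intro a ha
          rcases List.mem_cons.1 ha with rfl | h'
          · exact hp a (by simp)
          · exact hq a h'
    | cons g' p' =>
      simp only [glue]
      intro a ha
      rcases List.mem_cons.1 ha with rfl | h'
      · exact hp a (by simp)
      · exact ih q (fun b hb => hp b (by simp [List.mem_cons.1 hb])) hq a h'

lemma glue_chain : ∀ (p q : List (α × ℕ)),
    List.Chain' (fun a b => a.1 ≠ b.1) p → List.Chain' (fun a b => a.1 ≠ b.1) q →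
    List.Chain' (fun a b => a.1 ≠ b.1) (glue p q) := by
  intro p
  induction p with
  | nil => intro q _ hq; simpa [glue] using hq
  | cons g p ih =>
    intro q hp hq
    cases p with
    | nil =>
      cases q with
      | nil => simp [glue, List.Chain', List.isChain_singleton]
      | cons h q' =>
        by_cases hgh : g.1 = h.1
        · simp only [glue, if_pos hgh]
          rw [List.Chain', List.isChain_cons] at hq ⊢
          refine ⟨fun b hb => ?_, hq.2⟩
          have := hq.1 b hb
          simpa [hgh] using this
        · simp only [glue, if_neg hgh]
          rw [List.Chain', List.isChain_cons_cons]
          exact ⟨hgh, hq⟩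
    | cons g' p' =>
      simp only [glue]
      rw [List.Chain', List.isChain_cons]
      constructor
      · intro b hb
        obtain ⟨k, hk⟩ := head?_glue_fst g' p' q
        rw [hk] at hb
        cases hb
        exact (List.isChain_cons_cons.1 hp).1
      · exact ih q (List.isChain_cons.1 hp).2 hq

lemma cap_glue : ∀ (p p' q q' : List (α × ℕ)), cap p = cap p' → cap q = cap q' →
    cap (glue p q) = cap (glue p' q') := by
  intro p
  induction p with
  | nil =>
    intro p' q q' hp hq
    have : p' = [] := by simpa [cap] using hp.symm
    subst this
    simpa [glue] using hq
  | cons g p ih =>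
    intro p' q q' hp hq
    cases p' with
    | nil => simp [cap] at hp
    | cons g2 p2 =>
      simp only [cap, List.map_cons, List.cons.injEq, Prod.mk.injEq] at hp
      obtain ⟨⟨hg1, hg2⟩, hptl⟩ := hp
      cases p with
      | nil =>
        have hp2 : p2 = [] := by simpa [cap] using hptl.symm
        subst hp2
        cases q with
        | nil =>
          have : q' = [] := by simpa [cap] using hq.symm
          subst this
          simp [glue, cap, hg1, hg2]
        | cons h q1 =>
          cases q' with
          | nil => simp [cap] at hq
          | cons h2 q2 =>
            simp only [cap, List.map_cons, List.cons.injEq, Prod.mk.injEq] at hq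
            obtain ⟨⟨hh1, hh2⟩, hqtl⟩ := hq
            by_cases hgh : g.1 = h.1
            · have hgh2 : g2.1 = h2.1 := by rw [← hg1, ← hh1]; exact hgh
              simp only [glue, if_pos hgh, if_pos hgh2, cap, List.map_cons, List.cons.injEq,
                Prod.mk.injEq]
              refine ⟨⟨by rw [hg1], by omega⟩, hqtl⟩
            · have hgh2 : g2.1 ≠ h2.1 := by rw [← hg1, ← hh1]; exact hgh
              simp only [glue, if_neg hgh, if_neg hgh2, cap, List.map_cons, List.cons.injEq,
                Prod.mk.injEq]
              exact ⟨⟨hg1, hg2⟩, ⟨hh1, hh2⟩, hqtl⟩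
      | cons ga pa =>
        cases p2 with
        | nil => simp [cap] at hptl
        | cons gb pb =>
          simp only [glue, cap, List.map_cons, List.cons.injEq, Prod.mk.injEq]
          refine ⟨⟨hg1, hg2⟩, ?_⟩
          have := ih (gb :: pb) q q' hptl hq
          simpa [cap] using this

lemma cap_split : ∀ (p : List (α × ℕ)) (hs : List (α × ℕ)) (c : α) (m : ℕ) (q : List (α × ℕ)),
    cap hs = cap p ++ (c, min m 2) :: cap q →
    ∃ p' m' q', hs = p' ++ (c, m') :: q' ∧ cap p' = cap p ∧ min m' 2 = min m 2 ∧ cap q' = cap q := by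
  intro p
  induction p with
  | nil =>
    intro hs c m q h
    cases hs with
    | nil => simp [cap] at h
    | cons g hs' =>
      simp only [cap, List.map_cons, List.map_nil, List.nil_append, List.cons.injEq,
        Prod.mk.injEq] at h
      obtain ⟨⟨h1, h2⟩, h3⟩ := h
      refine ⟨[], g.2, hs', ?_, by simp [cap], h2, by simpa [cap] using h3⟩
      rw [List.nil_append, ← h1]
  | cons a p ih =>
    intro hs c m q h
    cases hs with
    | nil => simp [cap] at h
    | cons g hs' =>
      simp only [cap, List.map_cons, List.cons_append, List.cons.injEq, Prod.mk.injEq] at h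
      obtain ⟨⟨h1, h2⟩, h3⟩ := h
      obtain ⟨p', m', q', hsplit, hp', hm', hq'⟩ := ih hs' c m q (by simpa [cap] using h3)
      refine ⟨g :: p', m', q', by simp [hsplit], ?_, hm', hq'⟩
      simp only [cap, List.map_cons] at hp' ⊢
      rw [hp']
      simp [h1, h2]

lemma move_lift (gs hs : List (α × ℕ)) (hgs : IsGroups gs) (hhs : IsGroups hs)
    (hcap : cap gs = cap hs) (u' : List α) (hmove : ClickMove (wordOf gs) u') :
    ∃ gs' hs', IsGroups gs' ∧ IsGroups hs' ∧ cap gs' = cap hs' ∧ u' = wordOf gs' ∧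
      ClickMove (wordOf hs) (wordOf hs') := by
  obtain ⟨x, y, c, m, hm, hx, hy, hw, hw'⟩ := hmove
  obtain ⟨p, q, hsplit, hxp, hyq⟩ := parse c m hm x gs y hgs hx hy hw
  -- split the cap equality
  have hcap' : cap hs = cap p ++ (c, min m 2) :: cap q := by
    rw [← hcap, hsplit]; simp [cap]
  obtain ⟨p', m', q', hsplit', hp', hm', hq'⟩ := cap_split p hs c m q hcap'
  have hm'2 : 2 ≤ m' := by
    have : min m 2 = 2 := by omega
    omega
  -- groups facts for gs side
  rw [hsplit] at hgs
  obtain ⟨hgsz, hgch⟩ := hgs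
  rw [List.Chain', List.isChain_append] at hgch
  obtain ⟨hchp, hchcq, hjun⟩ := hgch
  have hchq : List.Chain' (fun a b => (a : α × ℕ).1 ≠ b.1) q := (List.isChain_cons.1 hchcq).2
  -- groups facts for hs side
  rw [hsplit'] at hhs
  obtain ⟨hhsz, hhch⟩ := hhs
  rw [List.Chain', List.isChain_append] at hhch
  obtain ⟨hchp', hchcq', hjun'⟩ := hhch
  have hchq' : List.Chain' (fun a b => (a : α × ℕ).1 ≠ b.1) q' := (List.isChain_cons.1 hchcq').2
  have hszp' : ∀ g ∈ p', 1 ≤ (g : α × ℕ).2 := fun g hg => hhsz g (by simp [hg])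
  have hszq' : ∀ g ∈ q', 1 ≤ (g : α × ℕ).2 := fun g hg => hhsz g (by simp [hg])
  have hszp : ∀ g ∈ p, 1 ≤ (g : α × ℕ).2 := fun g hg => hgsz g (by simp [hg])
  have hszq : ∀ g ∈ q, 1 ≤ (g : α × ℕ).2 := fun g hg => hgsz g (by simp [hg])
  refine ⟨glue p q, glue p' q', ⟨glue_sizes p q hszp hszq, glue_chain p q hchp hchq⟩,
    ⟨glue_sizes p' q' hszp' hszq', glue_chain p' q' hchp' hchq'⟩,
    cap_glue p p' q q' hp'.symm hq'.symm, ?_, ?_⟩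
  · rw [hw', wordOf_glue, hxp, hyq]
  · refine ⟨wordOf p', wordOf q', c, m', hm'2, ?_, ?_, ?_, wordOf_glue p' q'⟩
    · rw [getLast?_wordOf p' hszp']
      cases hlast : p'.getLast? with
      | none => simp
      | some g =>
        have : g.1 ≠ c := by
          have := hjun' g (by simp [hlast]) (c, m') (by simp)
          exact this
        simp [this]
    · rw [head?_wordOf q' hszq']
      cases hhead : q'.head? with
      | none => simp
      | some g =>
        have : c ≠ g.1 := by
          have := (List.isChain_cons.1 hchcq').1 g (by simp [hhead])
          exact this
        simp
        exact fun h => this h.symm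
    · rw [hsplit', wordOf_append, wordOf_cons]
      simp

lemma solvable_transfer : ∀ u : List α, Relation.ReflTransGen ClickMove u [] →
    ∀ gs hs : List (α × ℕ), IsGroups gs → IsGroups hs → cap gs = cap hs →
    u = wordOf gs → Solvable (wordOf hs) := by
  intro u h
  induction h using Relation.ReflTransGen.head_induction_on with
  | refl =>
    intro gs hs hgs hhs hcap hu
    have hgsnil : gs = [] := wordOf_eq_nil gs hgs.1 hu.symm
    subst hgsnil
    have : hs = [] := by simpa [cap] using hcap.symm
    subst this
    exact Relation.ReflTransGen.refl
  | @head u₁ u₂ hstep htail ih =>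
    intro gs hs hgs hhs hcap hu
    subst hu
    obtain ⟨gs', hs', hgs', hhs', hcap', hu', hmove⟩ :=
      move_lift gs hs hgs hhs hcap u₂ hstep
    exact Relation.ReflTransGen.head hmove (ih gs' hs' hgs' hhs' hcap' hu')

end Click

/-- A one-row Clickomania puzzle is solvable iff the word obtained by replacing
every maximal run of length greater than 2 by a run of the same letter of
length exactly 2 is solvable: a group with more than 2 blocks is equivalent to
a group with just 2 blocks. -/
theorem solvable_iff_truncated_solvable {k : ℕ}
    (w : List (Fin k)) (gs : List (Fin k × ℕ))
    (hg : IsGroups gs) (hw : w = wordOf gs) :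
    Solvable w ↔ Solvable (wordOf (gs.map fun g => (g.1, min g.2 2))) := by
  subst hw
  have hcap : Click.cap gs = gs.map fun g => (g.1, min g.2 2) := rfl
  have hgs2 : IsGroups (Click.cap gs) := by
    constructor
    · intro g hgmem
      simp only [Click.cap, List.mem_map] at hgmem
      obtain ⟨a, ha, rfl⟩ := hgmem
      have := hg.1 a ha
      simp
      omega
    · rw [Click.cap, List.Chain', List.isChain_map]
      exact hg.2
  have hcc : Click.cap (Click.cap gs) = Click.cap gs := by
    simp only [Click.cap, List.map_map]
    apply List.map_congr_left
    intro g _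
    simp [Function.comp, min_assoc]
  rw [← hcap]
  constructor
  · intro h
    exact Click.solvable_transfer (wordOf gs) h gs (Click.cap gs) hg hgs2 hcc.symm rfl
  · intro h
    exact Click.solvable_transfer _ h (Click.cap gs) gs hgs2 hg hcc rfl
end

section
/- Consider a solvable one-column two-color Clickomania puzzle with n groups, and let C be the longest checkerboard in the puzzle. If C is at an end of the puzzle (it contains the first or the last group), then |C| ≤ (n−1)/2. -/
/-- The groups with indices `i, i+1, …, i+len-1` (0-indexed) form a
checkerboard: a maximal-length sequence of consecutive groups each of size one. -/
def IsCheckerboard (gs : List (Bool × ℕ)) (i len : ℕ) : Prop :=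
  1 ≤ len ∧ i + len ≤ gs.length ∧
  (∀ j, i ≤ j → j < i + len → (gs.getD j (false, 0)).2 = 1) ∧
  (i = 0 ∨ 2 ≤ (gs.getD (i - 1) (false, 0)).2) ∧
  (i + len = gs.length ∨ 2 ≤ (gs.getD (i + len) (false, 0)).2)

namespace ClickAux

lemma wordOf_cons {α : Type*} (g : α × ℕ) (gs : List (α × ℕ)) :
    wordOf (g :: gs) = List.replicate g.2 g.1 ++ wordOf gs := by
  simp [wordOf]

lemma wordOf_append {α : Type*} (l1 l2 : List (α × ℕ)) :
    wordOf (l1 ++ l2) = wordOf l1 ++ wordOf l2 := by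
  simp [wordOf]

lemma head?_replicate_pos {α : Type*} {m : ℕ} (h : 1 ≤ m) (c : α) :
    (List.replicate m c).head? = some c := by
  obtain ⟨k, hk⟩ := Nat.exists_eq_add_of_le h
  rw [hk, Nat.add_comm, List.replicate_succ]
  simp

lemma getLast?_replicate_pos {α : Type*} {m : ℕ} (h : 1 ≤ m) (c : α) :
    (List.replicate m c).getLast? = some c := by
  rw [List.getLast?_eq_head?_reverse, List.reverse_replicate]
  exact head?_replicate_pos h c

lemma head?_wordOf {α : Type*} (g : α × ℕ) (gs : List (α × ℕ)) (h : 1 ≤ g.2) :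
    (wordOf (g :: gs)).head? = some g.1 := by
  rw [wordOf_cons]
  rw [List.head?_append, head?_replicate_pos h]
  rfl

lemma wordOf_ne_nil {α : Type*} (g : α × ℕ) (gs : List (α × ℕ)) (h : 1 ≤ g.2) :
    wordOf (g :: gs) ≠ [] := by
  intro hh
  have := head?_wordOf g gs h
  rw [hh] at this
  simp at this

lemma wordOf_eq_nil {α : Type*} {gs : List (α × ℕ)} (hs : ∀ g ∈ gs, 1 ≤ g.2)
    (h : wordOf gs = []) : gs = [] := by
  cases gs with
  | nil => rfl
  | cons g gs => exact absurd h (wordOf_ne_nil g gs (hs g (by simp)))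

lemma wordOf_reverse {α : Type*} (gs : List (α × ℕ)) :
    wordOf gs.reverse = (wordOf gs).reverse := by
  induction gs with
  | nil => rfl
  | cons g gs ih =>
    rw [List.reverse_cons, wordOf_append, wordOf_cons, ih, wordOf_cons, List.reverse_append]
    simp [wordOf]


lemma getD_append_left' {α : Type*} (l1 l2 : List α) (d : α) (k : ℕ) (hk : k < l1.length) :
    (l1 ++ l2).getD k d = l1.getD k d := by
  rw [List.getD_eq_getElem _ _ (by rw [List.length_append]; omega),
    List.getD_eq_getElem _ _ hk, List.getElem_append, dif_pos hk]

lemma getD_append_mid' {α : Type*} (l1 l2 : List α) (a : α) (d : α) :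
    (l1 ++ a :: l2).getD l1.length d = a := by
  rw [List.getD_eq_getElem _ _ (by rw [List.length_append]; simp),
    List.getElem_append, dif_neg (lt_irrefl _)]
  simp

lemma getD_append_right' {α : Type*} (l1 l2 : List α) (a : α) (d : α) (k : ℕ)
    (hk1 : l1.length < k) (hk2 : k < l1.length + 1 + l2.length) :
    (l1 ++ a :: l2).getD k d = l2.getD (k - l1.length - 1) d := by
  rw [List.getD_eq_getElem _ _ (by rw [List.length_append]; simp; omega),
    List.getD_eq_getElem _ _ (by omega : k - l1.length - 1 < l2.length),
    List.getElem_append, dif_neg (by omega)]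
  obtain ⟨i, hi⟩ : ∃ i, k - l1.length = i + 1 := ⟨k - l1.length - 1, by omega⟩
  simp only [hi, List.getElem_cons_succ, Nat.add_sub_cancel]

lemma getD_take' {α : Type*} (l : List α) (d : α) (j k : ℕ) (hk : k < j) (hj : j ≤ l.length) :
    (l.take j).getD k d = l.getD k d := by
  rw [List.getD_eq_getElem _ _ (by rw [List.length_take]; omega), List.getElem_take,
    ← List.getD_eq_getElem _ d (by omega)]

lemma getD_drop' {α : Type*} (l : List α) (d : α) (j k : ℕ) (hk : j + k < l.length) :
    (l.drop j).getD k d = l.getD (j + k) d := by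
  rw [List.getD_eq_getElem _ _ (by rw [List.length_drop]; omega), List.getElem_drop,
    ← List.getD_eq_getElem _ d hk]

lemma factor (gs : List (Bool × ℕ)) :
    ∀ (x y : List Bool) (c : Bool) (m : ℕ),
    (∀ g ∈ gs, 1 ≤ g.2) → List.Chain' (fun a b => a.1 ≠ b.1) gs →
    2 ≤ m → x.getLast? ≠ some c → y.head? ≠ some c →
    wordOf gs = x ++ List.replicate m c ++ y →
    ∃ j, j < gs.length ∧ gs.getD j (false, 0) = (c, m) ∧
      x = wordOf (gs.take j) ∧ y = wordOf (gs.drop (j + 1)) := by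
  induction gs with
  | nil =>
    intro x y c m _ _ hm _ _ hw
    exfalso
    have := congrArg List.length hw
    simp [wordOf] at this
    omega
  | cons g rest ih =>
    obtain ⟨b, s⟩ := g
    intro x y c m hsz hch hm hx hy hw
    rw [wordOf_cons, List.append_assoc] at hw
    have hs : 1 ≤ s := hsz (b, s) (by simp)
    have hrsz : ∀ g ∈ rest, 1 ≤ g.2 := fun g hg => hsz g (by simp [hg])
    have hrch : List.Chain' (fun a b => a.1 ≠ b.1) rest := hch.tail
    rcases List.append_eq_append_iff.mp hw with ⟨t, hxt, hrt⟩ | ⟨u, hxu, hyu⟩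
    · have ht : t.getLast? ≠ some c := by
        cases t with
        | nil => simp
        | cons t0 ts =>
          rw [hxt, List.getLast?_append] at hx
          simpa using hx
      rw [← List.append_assoc] at hrt
      obtain ⟨j, hj, hgd, hxx, hyy⟩ := ih t y c m hrsz hrch hm ht hy hrt
      refine ⟨j + 1, by simpa using hj, by simpa using hgd, ?_, by simpa using hyy⟩
      rw [hxt, hxx, List.take_succ_cons, wordOf_cons]
    · have hxrep : x = List.replicate x.length b := by
        apply List.eq_replicate_of_mem
        intro z hz
        have : z ∈ List.replicate s b := by rw [hxu]; exact List.mem_append_left _ hz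
        exact List.eq_of_mem_replicate this
      have hurep : u = List.replicate u.length b := by
        apply List.eq_replicate_of_mem
        intro z hz
        have : z ∈ List.replicate s b := by rw [hxu]; exact List.mem_append_right _ hz
        exact List.eq_of_mem_replicate this
      have hlensum : x.length + u.length = s := by
        have := congrArg List.length hxu
        simpa using this.symm
      cases x with
      | cons x0 xs =>
        have hbc : b ≠ c := by
          intro h
          apply hx
          rw [hxrep, getLast?_replicate_pos (by simp) b, h]
        have hu : u = [] := by
          by_contra hne
          have hu1 : 1 ≤ u.length := by
            cases u with
            | nil => exact absurd rfl hne
            | cons _ _ => simp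
          have h1 : (u ++ wordOf rest).head? = some b := by
            rw [hurep, List.head?_append, head?_replicate_pos hu1 b]
            rfl
          rw [← hyu, List.head?_append, head?_replicate_pos (by omega) c] at h1
          simp at h1
          exact hbc h1.symm
        rw [hu, List.nil_append] at hyu
        have hyu' : wordOf rest = [] ++ List.replicate m c ++ y := by
          rw [List.nil_append, hyu]
        obtain ⟨j, hj, hgd, hxx, hyy⟩ := ih [] y c m hrsz hrch hm (by simp) hy hyu'
        refine ⟨j + 1, by simpa using hj, by simpa using hgd, ?_, by simpa using hyy⟩
        rw [List.take_succ_cons, wordOf_cons, ← hxx, List.append_nil]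
        rw [hu, List.append_nil] at hxu
        exact hxu.symm
      | nil =>
        rw [List.nil_append] at hxu
        subst hxu
        have hcb : c = b := by
          have h1 : (List.replicate m c ++ y).head? = some c := by
            rw [List.head?_append, head?_replicate_pos (by omega) c]; rfl
          rw [hyu, List.head?_append, head?_replicate_pos hs b] at h1
          simpa using h1.symm
        subst hcb
        rcases Nat.lt_trichotomy m s with hms | hms | hms
        · exfalso
          have : List.replicate s c = List.replicate m c ++ List.replicate (s - m) c := by
            rw [← List.replicate_add]; congr 1; omega
          rw [this, List.append_assoc] at hyu
          have hy2 := List.append_cancel_left hyu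
          apply hy
          rw [hy2, List.head?_append, head?_replicate_pos (by omega) c]
          rfl
        · subst hms
          have hy2 := List.append_cancel_left hyu
          exact ⟨0, by simp, by simp, by simp [wordOf], by simpa [wordOf] using hy2⟩
        · exfalso
          have : List.replicate m c = List.replicate s c ++ List.replicate (m - s) c := by
            rw [← List.replicate_add]; congr 1; omega
          rw [this, List.append_assoc] at hyu
          have hy2 := List.append_cancel_left hyu
          cases rest with
          | nil =>
            have := congrArg List.length hy2
            simp [wordOf] at this
            omega
          | cons g2 rest2 =>
            have hh : (wordOf (g2 :: rest2)).head? = some g2.1 :=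
              head?_wordOf g2 rest2 (hrsz g2 (by simp))
            rw [← hy2, List.head?_append, head?_replicate_pos (by omega) c] at hh
            simp at hh
            have hrel := (List.isChain_cons_cons.mp hch).1
            exact hrel hh

lemma not_solvable_singletons (gs : List (Bool × ℕ)) (hg : IsGroups gs)
    (hall : ∀ g ∈ gs, g.2 = 1) (hne : gs ≠ []) : ¬ Solvable (wordOf gs) := by
  intro hs
  rcases Relation.ReflTransGen.cases_head hs with heq | ⟨w', hmv, _⟩
  · exact hne (wordOf_eq_nil hg.1 heq)
  · obtain ⟨x, y, c, m, hm, hx, hy, hw, _⟩ := hmv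
    obtain ⟨j, hj, hgd, _, _⟩ := factor gs x y c m hg.1 hg.2 hm hx hy hw
    have hmem : gs.getD j (false, 0) ∈ gs := by
      rw [List.getD_eq_getElem _ _ hj]
      exact List.getElem_mem hj
    have := hall _ hmem
    rw [hgd] at this
    simp at this
    omega

lemma clickMove_reverse {w w' : List Bool} (h : ClickMove w w') :
    ClickMove w.reverse w'.reverse := by
  obtain ⟨x, y, c, m, hm, hx, hy, hw, hw'⟩ := h
  refine ⟨y.reverse, x.reverse, c, m, hm, ?_, ?_, ?_, ?_⟩
  · rw [List.getLast?_reverse]; exact hy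
  · rw [List.head?_reverse]; exact hx
  · rw [hw]
    simp [List.reverse_append, List.reverse_replicate, List.append_assoc]
  · rw [hw']
    simp [List.reverse_append]

lemma solvable_reverse {w : List Bool} (h : Solvable w) : Solvable w.reverse := by
  have := Relation.ReflTransGen.lift List.reverse
    (fun a b hab => clickMove_reverse hab) _ _ h
  exact this

lemma main_left (w : List Bool) (hs : Solvable w) :
    ∀ gs : List (Bool × ℕ), IsGroups gs → wordOf gs = w →
    ∀ len : ℕ, 1 ≤ len → len ≤ gs.length →
    (∀ k, k < len → (gs.getD k (false, 0)).2 = 1) →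
    (len = gs.length ∨ 2 ≤ (gs.getD len (false, 0)).2) →
    2 * len + 1 ≤ gs.length := by
  induction hs using Relation.ReflTransGen.head_induction_on with
  | refl =>
    intro gs hg hw len h1 hln _ _
    have := wordOf_eq_nil hg.1 hw
    subst this
    simp at hln
    omega
  | head hmv htl ih =>
    intro gs hg hw len h1 hln hsing hbd
    obtain ⟨x, y, c, m, hm, hx, hy, hwx, hw'⟩ := hmv
    rw [← hw] at hwx
    obtain ⟨j, hj, hgd, hxx, hyy⟩ := factor gs x y c m hg.1 hg.2 hm hx hy hwx
    have hsz_at : ∀ k, k < gs.length → 1 ≤ (gs.getD k (false, 0)).2 := by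
      intro k hk
      apply hg.1
      rw [List.getD_eq_getElem _ _ hk]
      exact List.getElem_mem hk
    have hchain : ∀ i, i + 1 < gs.length →
        (gs.getD i (false, 0)).1 ≠ (gs.getD (i + 1) (false, 0)).1 := by
      intro i hi
      have h := List.isChain_iff_getElem.mp hg.2 i (by omega)
      rw [List.getD_eq_getElem _ _ (show i < gs.length by omega),
        List.getD_eq_getElem _ _ hi]
      simpa using h
    have hjlen : len ≤ j := by
      by_contra h
      have := hsing j (by omega)
      rw [hgd] at this
      simp at this
      omega
    have hlenn : len < gs.length := lt_of_le_of_lt hjlen hj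
    have hbd2 : 2 ≤ (gs.getD len (false, 0)).2 := by
      rcases hbd with h | h
      · omega
      · exact h
    by_cases hcase : j + 1 = gs.length
    · -- deleted group is the last one
      have hdrop : gs.drop (j + 1) = [] := by
        rw [hcase, List.drop_length]
      have hy_nil : y = [] := by rw [hyy, hdrop]; rfl
      have hw'2 : wordOf (gs.take j) = x ++ y := by rw [hy_nil, ← hxx, List.append_nil]
      have hg' : IsGroups (gs.take j) :=
        ⟨fun g hgm => hg.1 g (List.mem_of_mem_take hgm), hg.2.take j⟩
      have hlen' : (gs.take j).length = j := by
        rw [List.length_take]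
        omega
      rcases eq_or_lt_of_le hjlen with hje | hjl
      · -- j = len : remaining word is all singletons, contradiction
        exfalso
        apply not_solvable_singletons (gs.take j) hg' ?_ ?_
        · rw [hw'2, ← hw']
          exact htl
        · intro g hgm
          obtain ⟨k, hk, hk2⟩ := List.mem_iff_getElem.mp hgm
          rw [List.getElem_take] at hk2
          rw [hlen'] at hk
          have := hsing k (by omega)
          rw [List.getD_eq_getElem _ _ (by omega)] at this
          rw [hk2] at this
          exact this
        · intro hnil
          rw [hnil] at hlen'
          simp at hlen'
          omega
      · -- len < j
        have := ih (gs.take j) hg' (by rw [hw'2, hw']) len h1 (by omega) ?_ ?_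
        · omega
        · intro k hk
          rw [List.getD_eq_getElem _ _ (by omega), List.getElem_take,
            ← List.getD_eq_getElem _ (false, 0) (by omega)]
          exact hsing k hk
        · right
          rw [List.getD_eq_getElem _ _ (by omega), List.getElem_take,
            ← List.getD_eq_getElem _ (false, 0) (by omega)]
          exact hbd2
    · -- interior deletion: merge neighbours
      have hj2 : j + 2 ≤ gs.length := by omega
      have hj1 : 1 ≤ j := le_trans h1 hjlen
      set p := gs.getD (j - 1) (false, 0) with hp
      set q := gs.getD (j + 1) (false, 0) with hq
      have hpq : p.1 = q.1 := by
        have h1' : p.1 ≠ (gs.getD j (false, 0)).1 := by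
          have := hchain (j - 1) (by omega)
          rw [show j - 1 + 1 = j by omega] at this
          exact this
        have h2' : (gs.getD j (false, 0)).1 ≠ q.1 := hchain j (by omega)
        revert h1' h2'
        cases p.1 <;> cases (gs.getD j (false, 0)).1 <;> cases q.1 <;> simp
      set gs' : List (Bool × ℕ) :=
        gs.take (j - 1) ++ (p.1, p.2 + q.2) :: gs.drop (j + 2) with hgs'
      have hlen' : gs'.length = gs.length - 2 := by
        rw [hgs']
        simp [List.length_take, List.length_drop]
        omega
      have htklen : (gs.take (j - 1)).length = j - 1 := by
        rw [List.length_take]; omega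
      have hget_low : ∀ k, k < j - 1 → gs'.getD k (false, 0) = gs.getD k (false, 0) := by
        intro k hk
        rw [hgs', getD_append_left' _ _ _ _ (by rw [htklen]; omega : _ < (gs.take (j-1)).length)]
        · exact getD_take' gs _ (j - 1) k hk (by omega)
      have hget_mid : gs'.getD (j - 1) (false, 0) = (p.1, p.2 + q.2) := by
        rw [hgs']
        have := getD_append_mid' (gs.take (j - 1)) (gs.drop (j + 2)) (p.1, p.2 + q.2) ((false, 0) : Bool × ℕ)
        rw [htklen] at this
        exact this
      have hget_high : ∀ k, j - 1 < k → k < gs.length - 2 →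
          gs'.getD k (false, 0) = gs.getD (k + 2) (false, 0) := by
        intro k hk1 hk2
        rw [hgs', getD_append_right' _ _ _ _ k (by rw [htklen]; omega)
          (by rw [htklen, List.length_drop]; omega)]
        rw [htklen, getD_drop' gs _ (j + 2) (k - (j - 1) - 1) (by omega)]
        congr 1
        omega
      have hp1 : 1 ≤ p.2 := hsz_at (j - 1) (by omega)
      have hq1 : 1 ≤ q.2 := hsz_at (j + 1) (by omega)
      have htake : gs.take j = gs.take (j - 1) ++ [p] := by
        have hj0 : j - 1 < gs.length := by omega
        have h2 : gs.take ((j - 1) + 1) = gs.take (j - 1) ++ [p] := by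
          rw [List.take_succ, List.getElem?_eq_getElem hj0, hp,
            List.getD_eq_getElem _ _ hj0]
          simp
        rw [← h2]
        congr 1
        omega
      have hdrop : gs.drop (j + 1) = q :: gs.drop (j + 2) := by
        rw [List.drop_eq_getElem_cons (by omega : j + 1 < gs.length),
          hq, List.getD_eq_getElem _ _ (by omega : j + 1 < gs.length)]
      have hword' : wordOf gs' = x ++ y := by
        have e1 : x = wordOf (gs.take (j - 1)) ++ List.replicate p.2 p.1 := by
          rw [hxx, htake, wordOf_append]
          congr 1
          simp [wordOf]
        have e2 : y = List.replicate q.2 q.1 ++ wordOf (gs.drop (j + 2)) := by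
          rw [hyy, hdrop, wordOf_cons]
        rw [hgs', wordOf_append, wordOf_cons, e1, e2]
        simp only [List.append_assoc]
        congr 1
        rw [← hpq, List.replicate_add, List.append_assoc]
      have hg' : IsGroups gs' := by
        constructor
        · intro g hgm
          rw [hgs'] at hgm
          rcases List.mem_append.mp hgm with h | h
          · exact hg.1 g (List.mem_of_mem_take h)
          · rcases List.mem_cons.mp h with h | h
            · rw [h]; simp; omega
            · exact hg.1 g (List.mem_of_mem_drop h)
        · show List.IsChain _ gs'
          rw [List.isChain_iff_getElem]
          intro i hi
          rw [hlen'] at hi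
          rw [← List.getD_eq_getElem _ (false, 0) (by rw [hlen']; omega),
            ← List.getD_eq_getElem _ (false, 0) (by rw [hlen']; omega)]
          rcases lt_trichotomy (i + 1) (j - 1) with h | h | h
          · rw [hget_low i (by omega), hget_low (i + 1) h]
            exact hchain i (by omega)
          · rw [hget_low i (by omega), h, hget_mid]
            have := hchain i (by omega)
            rw [show i + 1 = j - 1 by omega] at this
            exact this
          · rcases lt_trichotomy i (j - 1) with h2 | h2 | h2
            · omega
            · rw [h2, hget_mid, show j - 1 + 1 = j by omega,
                hget_high j (by omega) (by omega)]
              show p.1 ≠ (gs.getD (j + 2) (false, 0)).1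
              rw [hpq, hq]
              have h3 := hchain (j + 1) (by omega)
              rw [show j + 1 + 1 = j + 2 by omega] at h3
              exact h3
            · rw [hget_high i h2 (by omega), hget_high (i + 1) (by omega) (by omega)]
              have := hchain (i + 2) (by omega)
              rw [show i + 1 + 2 = i + 2 + 1 by omega]
              exact this
      rcases eq_or_lt_of_le hjlen with hje | hjl
      · -- j = len
        rcases eq_or_lt_of_le h1 with hl1 | hl2
        · -- len = 1
          omega
        · -- 2 ≤ len
          have := ih gs' hg' (by rw [hword', hw']) (len - 1) (by omega)
            (by rw [hlen']; omega) ?_ ?_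
          · omega
          · intro k hk
            rw [hget_low k (by omega)]
            exact hsing k (by omega)
          · right
            rw [show len - 1 = j - 1 by omega, hget_mid]
            simp
            omega
      · -- len < j
        have := ih gs' hg' (by rw [hword', hw']) len h1 (by rw [hlen']; omega) ?_ ?_
        · omega
        · intro k hk
          rw [hget_low k (by omega)]
          exact hsing k hk
        · right
          rcases eq_or_lt_of_le (show len ≤ j - 1 by omega) with he | hlt
          · rw [he, hget_mid]
            simp
            omega
          · rw [hget_low len hlt]
            exact hbd2

end ClickAux

/-- In a solvable one-column two-color Clickomania puzzle with `n` groups,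
if the longest checkerboard `C` is at an end of the puzzle, then
`|C| ≤ (n - 1) / 2`. -/
theorem longest_checkerboard_at_end_le (gs : List (Bool × ℕ)) (hg : IsGroups gs)
    (hs : Solvable (wordOf gs)) (i len : ℕ)
    (hC : IsCheckerboard gs i len)
    (hlongest : ∀ i' len', IsCheckerboard gs i' len' → len' ≤ len)
    (hend : i = 0 ∨ i + len = gs.length) :
    (len : ℚ) ≤ ((gs.length : ℚ) - 1) / 2 := by
  obtain ⟨h1, h2, hsing, hleft, hright⟩ := hC
  have key : 2 * len + 1 ≤ gs.length := by
    rcases hend with hi0 | hiend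
    · subst hi0
      apply ClickAux.main_left (wordOf gs) hs gs hg rfl len h1 (by omega)
      · intro k hk
        exact hsing k (by omega) (by omega)
      · simpa using hright
    · -- right end: use reversal
      have hrev : Solvable (wordOf gs.reverse) := by
        rw [ClickAux.wordOf_reverse]
        exact ClickAux.solvable_reverse hs
      have hgrev : IsGroups gs.reverse := by
        refine ⟨fun g hgm => hg.1 g (List.mem_reverse.mp hgm), ?_⟩
        show List.IsChain _ _
        rw [List.isChain_reverse]
        exact hg.2.imp (fun a b h => Ne.symm h)
      have hrevget : ∀ k, k < gs.length →
          gs.reverse.getD k (false, 0) = gs.getD (gs.length - 1 - k) (false, 0) := by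
        intro k hk
        rw [List.getD_eq_getElem _ _ (by simpa using hk),
          List.getElem_reverse, ← List.getD_eq_getElem _ (false, 0) (by omega)]
      have := ClickAux.main_left (wordOf gs.reverse) hrev gs.reverse hgrev rfl len h1
        (by rw [List.length_reverse]; omega) ?_ ?_
      · simpa using this
      · intro k hk
        rw [hrevget k (by omega)]
        exact hsing _ (by omega) (by omega)
      · by_cases hi : i = 0
        · left
          rw [List.length_reverse]
          omega
        · right
          have hi1 : 1 ≤ i := by omega
          rw [hrevget len (by omega)]
          rw [show gs.length - 1 - len = i - 1 by omega]
          rcases hleft with h | h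
          · omega
          · exact h
  have : (2 * len + 1 : ℚ) ≤ (gs.length : ℚ) := by exact_mod_cast key
  linarith
end

section
/- Consider a solvable one-column two-color Clickomania puzzle with n groups, and let C be the longest checkerboard in the puzzle. If C is strictly interior to the puzzle (it contains neither the first nor the last group), then |C| ≤ (n−2)/2. -/
lemma wordOf_nil {α : Type*} : wordOf ([] : List (α × ℕ)) = [] := rfl

lemma wordOf_cons {α : Type*} (g : α × ℕ) (t : List (α × ℕ)) :
    wordOf (g :: t) = List.replicate g.2 g.1 ++ wordOf t := by
  simp [wordOf]

lemma wordOf_append {α : Type*} (s t : List (α × ℕ)) :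
    wordOf (s ++ t) = wordOf s ++ wordOf t := by
  simp [wordOf]

lemma head?_wordOf_ne {α : Type*} {c : α} {gs : List (α × ℕ)}
    (h1 : ∀ g ∈ gs, 1 ≤ g.2) (h2 : ∀ g ∈ gs.head?, g.1 ≠ c) :
    (wordOf gs).head? ≠ some c := by
  cases gs with
  | nil => simp [wordOf]
  | cons g t =>
    have hg : 1 ≤ g.2 := h1 g (by simp)
    have : (wordOf (g :: t)).head? = some g.1 := by
      rw [wordOf_cons, List.head?_append]
      cases g with
      | mk a k =>
        cases k with
        | zero => omega
        | succ k => simp [List.replicate_succ]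
    rw [this]
    simpa using h2 g (by simp)

lemma rep_cancel {α : Type*} {a : α} :
    ∀ {k m : ℕ} {t y : List α}, t.head? ≠ some a → y.head? ≠ some a →
      List.replicate k a ++ t = List.replicate m a ++ y → k = m ∧ t = y := by
  intro k
  induction k with
  | zero =>
    intro m t y ht hy h
    cases m with
    | zero => exact ⟨rfl, by simpa using h⟩
    | succ m =>
      exfalso
      simp only [List.replicate_zero, List.replicate_succ, List.nil_append,
        List.cons_append] at h
      exact ht (by rw [h]; rfl)
  | succ k ih =>
    intro m t y ht hy h
    cases m with
    | zero =>
      exfalso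
      simp only [List.replicate_zero, List.replicate_succ, List.nil_append,
        List.cons_append] at h
      exact hy (by rw [← h]; rfl)
    | succ m =>
      simp only [List.replicate_succ, List.cons_append, List.cons.injEq] at h
      obtain ⟨k_eq, t_eq⟩ := ih ht hy h.2
      exact ⟨by omega, t_eq⟩

lemma exists_split {α : Type*} {c : α} {m : ℕ} (hm : 2 ≤ m) :
    ∀ (gs : List (α × ℕ)) (x y : List α), IsGroups gs →
      x.getLast? ≠ some c → y.head? ≠ some c →
      wordOf gs = x ++ (List.replicate m c ++ y) →
      ∃ gs₁ gs₂, gs = gs₁ ++ (c, m) :: gs₂ ∧ wordOf gs₁ = x ∧ wordOf gs₂ = y := by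
  intro gs
  induction gs with
  | nil =>
    intro x y _ _ _ hw
    exfalso
    have := congrArg List.length hw
    simp [wordOf] at this
    omega
  | cons g rest ih =>
    intro x y hg hxl hy hw
    obtain ⟨a, k⟩ := g
    have hk : 1 ≤ k := hg.1 (a, k) (by simp)
    have hrest : IsGroups rest :=
      ⟨fun g' hm' => hg.1 g' (List.mem_cons_of_mem _ hm'), (List.isChain_cons.mp hg.2).2⟩
    rw [wordOf_cons] at hw
    dsimp only at hw
    by_cases hx : x = []
    · subst hx
      simp only [List.nil_append] at hw
      have hac : a = c := by
        have h1 : (List.replicate k a ++ wordOf rest).head? = some a := by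
          rw [List.head?_append]
          cases k with
          | zero => omega
          | succ k => simp [List.replicate_succ]
        have h2 : (List.replicate m c ++ y).head? = some c := by
          rw [List.head?_append]
          cases m with
          | zero => omega
          | succ m => simp [List.replicate_succ]
        rw [hw, h2] at h1
        exact (Option.some.inj h1).symm
      subst hac
      have ht : (wordOf rest).head? ≠ some a := by
        apply head?_wordOf_ne hrest.1
        intro g' hg'
        have := (List.isChain_cons.mp hg.2).1 g' hg'
        exact fun h => this h.symm
      obtain ⟨hk_eq, ht_eq⟩ := rep_cancel ht hy hw
      exact ⟨[], rest, by simp [hk_eq], rfl, ht_eq⟩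
    · -- strip the first group from x
      have hkx : k ≤ x.length := by
        by_contra hlt
        push_neg at hlt
        have hxpre : x = List.replicate x.length a := by
          have : x = (x ++ (List.replicate m c ++ y)).take x.length := by
            rw [List.take_append_of_le_length (le_refl _), List.take_length]
          rw [this, ← hw, List.take_append_of_le_length (by simpa using hlt.le),
            List.take_replicate, min_eq_left hlt.le]
          simp
        have hane : a ≠ c := by
          intro h
          apply hxl
          rw [hxpre, List.getLast?_replicate, if_neg (by
            intro h0; exact hx (by rw [hxpre, h0]; rfl)), h]
        have e1 : (List.replicate k a ++ wordOf rest)[x.length]? = some a := by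
          rw [List.getElem?_append_left (by simpa using hlt), List.getElem?_replicate,
            if_pos hlt]
        have e2 : (x ++ (List.replicate m c ++ y))[x.length]? = some c := by
          rw [List.getElem?_append_right (le_refl _), Nat.sub_self,
            List.getElem?_append_left (by simpa using (by omega : 0 < m)),
            List.getElem?_replicate, if_pos (by omega)]
        rw [hw, e2] at e1
        exact hane (Option.some.inj e1).symm
      have hxtake : x.take k = List.replicate k a := by
        have : x.take k = (x ++ (List.replicate m c ++ y)).take k := by
          rw [List.take_append_of_le_length hkx]
        rw [this, ← hw, List.take_append_of_le_length (by simp),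
          List.take_replicate, min_self]
      set x' := x.drop k with hx'def
      have hx1 : x = List.replicate k a ++ x' := by
        rw [← hxtake, hx'def, List.take_append_drop]
      have hw' : wordOf rest = x' ++ (List.replicate m c ++ y) := by
        apply List.append_cancel_left (as := List.replicate k a)
        rw [hw, hx1]
        simp
      have hx'l : x'.getLast? ≠ some c := by
        cases hx'e : x'.getLast? with
        | none => simp
        | some v =>
          have : x.getLast? = some v := by
            rw [hx1, List.getLast?_append, hx'e]
            rfl
          intro h
          exact hxl (by rw [this, ← h])
      obtain ⟨gs₁', gs₂', hsp, hw1, hw2⟩ := ih x' y hrest hx'l hy hw'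
      refine ⟨(a, k) :: gs₁', gs₂', by rw [hsp]; rfl, ?_, hw2⟩
      rw [wordOf_cons, hw1, ← hx1]

lemma head?_append_left' {α : Type*} {s t : List α} (h : s ≠ []) :
    (s ++ t).head? = s.head? := by
  rw [List.head?_append]
  cases hs : s.head? with
  | none => exact absurd (List.head?_eq_none_iff.mp hs) h
  | some v => rfl

lemma getLast?_append_right' {α : Type*} {l t : List α} (h : t ≠ []) :
    (l ++ t).getLast? = t.getLast? := by
  rw [List.getLast?_append]
  cases ht : t.getLast? with
  | none => exact absurd (List.getLast?_eq_none_iff.mp ht) h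
  | some v => rfl

/-- Structural checkerboard bound property. -/
def Good (gs : List (Bool × ℕ)) : Prop :=
  ∀ A B C : List (Bool × ℕ), gs = A ++ B ++ C → (∀ g ∈ B, g.2 = 1) →
    (∀ g ∈ A.getLast?, 2 ≤ g.2) → (∀ g ∈ C.head?, 2 ≤ g.2) → 1 ≤ B.length →
    B.length + 2 ≤ A.length + C.length +
      ((if A = [] then 1 else 0) + (if C = [] then 1 else 0))

lemma split_cases {c : Bool} {m : ℕ} (hm : 2 ≤ m)
    {gs gs₁ gs₂ A B C : List (Bool × ℕ)}
    (h : gs = gs₁ ++ (c, m) :: gs₂) (h2 : gs = A ++ B ++ C)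
    (hB : ∀ g ∈ B, g.2 = 1) (hBne : B ≠ []) :
    (∃ t', A = gs₁ ++ (c, m) :: t' ∧ gs₂ = t' ++ B ++ C) ∨
    (∃ s, gs₁ = A ++ B ++ s ∧ C = s ++ (c, m) :: gs₂) := by
  have key : gs₁ ++ ((c, m) :: gs₂) = A ++ (B ++ C) := by
    rw [← h, h2, List.append_assoc]
  rcases List.append_eq_append_iff.mp key with ⟨t, hA', hrest⟩ | ⟨t, hg₁, hrest⟩
  · cases t with
    | nil =>
      exfalso
      simp only [List.nil_append] at hrest
      cases B with
      | nil => exact hBne rfl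
      | cons b B' =>
        have : b = (c, m) := by
          have := hrest
          simp only [List.cons_append] at this
          exact (List.cons.injEq .. ▸ this).1.symm
        have := hB b (by simp)
        rw [this] at *
        simp [show b = (c,m) from ‹_›] at *
        omega
    | cons t₀ t' =>
      left
      simp only [List.cons_append] at hrest
      have ht₀ : t₀ = (c, m) := ((List.cons.injEq ..).mp hrest).1.symm
      have hgs₂ : gs₂ = t' ++ (B ++ C) := ((List.cons.injEq ..).mp hrest).2
      exact ⟨t', by rw [hA', ht₀], by rw [hgs₂, List.append_assoc]⟩
  · rcases List.append_eq_append_iff.mp hrest with ⟨s, ht', hC'⟩ | ⟨s, hBeq, hrest2⟩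
    · right
      exact ⟨s, by rw [hg₁, ht', List.append_assoc], hC'⟩
    · cases s with
      | nil =>
        right
        refine ⟨[], ?_, ?_⟩
        · rw [hg₁, hBeq]
          simp
        · simpa using hrest2.symm
      | cons s₀ s' =>
        exfalso
        simp only [List.cons_append] at hrest2
        have hs₀ : (c, m) = s₀ := ((List.cons.injEq ..).mp hrest2).1
        have : s₀ ∈ B := by rw [hBeq]; simp
        have := hB s₀ this
        rw [← hs₀] at this
        simp at this
        omega

lemma solvable_good {w : List Bool} (hw : Relation.ReflTransGen ClickMove w []) :
    ∀ gs : List (Bool × ℕ), IsGroups gs → wordOf gs = w → Good gs := by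
  induction hw using Relation.ReflTransGen.head_induction_on with
  | refl =>
    intro gs hg hge A B C hdec hB hA hC hBlen
    exfalso
    have hnil : gs = [] := by
      cases gs with
      | nil => rfl
      | cons g t =>
        exfalso
        have h1 : 1 ≤ g.2 := hg.1 g (by simp)
        have := congrArg List.length hge
        rw [wordOf_cons] at this
        simp at this
        omega
    rw [hnil] at hdec
    have : B = [] := by
      have := hdec.symm
      simp only [List.append_eq_nil_iff] at this
      exact this.1.2
    rw [this] at hBlen
    simp at hBlen
  | head hstep htail ih =>
    intro gs hg hge
    obtain ⟨x, y, c, m, hm, hxl, hyh, hweq, hw'eq⟩ := hstep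
    obtain ⟨gs₁, gs₂, hsp, hx, hy2⟩ :=
      exists_split hm gs x y hg hxl hyh (by rw [hge, hweq, List.append_assoc])
    have hBne' : ∀ (B : List (Bool × ℕ)), 1 ≤ B.length → B ≠ [] := by
      intro B h hB0; rw [hB0] at h; simp at h
    by_cases h1 : gs₁ = []
    · -- deleted group is at the left end
      subst h1
      have hx0 : x = [] := by rw [← hx]; rfl
      have hg₂ : IsGroups gs₂ := by
        refine ⟨fun g hmem => hg.1 g (by rw [hsp]; simp [hmem]), ?_⟩
        have := hg.2
        rw [hsp] at this
        simp only [List.nil_append] at this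
        exact (List.isChain_cons.mp this).2
      have hGood : Good gs₂ := ih gs₂ hg₂ (by rw [hw'eq, hx0, List.nil_append]; exact hy2)
      intro A B C hdec hB hA hC hBlen
      rcases split_cases hm hsp hdec hB (hBne' B hBlen) with ⟨t', hA', hg₂'⟩ | ⟨s, hg₁', hC'⟩
      · have hres := hGood t' B C hg₂' hB ?_ hC hBlen
        · have lA := congrArg List.length hA'
          simp at lA
          have hAne : A ≠ [] := by rw [hA']; simp
          rw [if_neg hAne]
          by_cases ht' : t' = [] <;> by_cases hCe : C = [] <;>
            simp [ht', hCe] at hres ⊢ <;> first | omega | (rw [hres] at hBlen; simp at hBlen)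
        · intro g hgm
          cases ht' : t' with
          | nil => simp [ht'] at hgm
          | cons a b =>
            have heq : A.getLast? = t'.getLast? := by
              rw [hA', List.nil_append, ← List.singleton_append,
                getLast?_append_right' (by rw [ht']; simp)]
            exact hA g (heq ▸ hgm)
      · exfalso
        have := hg₁'.symm
        simp only [List.append_eq_nil_iff] at this
        exact hBne' B hBlen this.1.2
    · by_cases h2 : gs₂ = []
      · -- deleted group is at the right end
        subst h2
        have hy0 : y = [] := by rw [← hy2]; rfl
        have hg₁ : IsGroups gs₁ := by
          refine ⟨fun g hmem => hg.1 g (by rw [hsp]; simp [hmem]), ?_⟩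
          have := hg.2
          rw [hsp] at this
          exact (List.isChain_append.mp this).1
        have hGood : Good gs₁ := ih gs₁ hg₁ (by rw [hw'eq, hy0, List.append_nil]; exact hx)
        intro A B C hdec hB hA hC hBlen
        rcases split_cases hm hsp hdec hB (hBne' B hBlen) with ⟨t', hA', hg₂'⟩ | ⟨s, hg₁', hC'⟩
        · exfalso
          have := hg₂'.symm
          simp only [List.append_eq_nil_iff] at this
          exact hBne' B hBlen this.1.2
        · have hres := hGood A B s hg₁' hB hA ?_ hBlen
          · have lC := congrArg List.length hC'
            simp at lC
            have hCne : C ≠ [] := by rw [hC']; intro h; have := congrArg List.length h; simp at this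
            rw [if_neg hCne]
            by_cases hs : s = [] <;> by_cases hAe : A = [] <;>
              simp [hs, hAe] at hres ⊢ <;> first | omega | (rw [hres] at hBlen; simp at hBlen)
          · intro g hgm
            cases hs : s with
            | nil => simp [hs] at hgm
            | cons a b =>
              have heq : C.head? = s.head? := by
                rw [hC', head?_append_left' (by rw [hs]; simp)]
              exact hC g (heq ▸ hgm)
      · -- interior deletion: merge the two neighbours
        obtain ⟨u, dp, hu⟩ := (List.eq_nil_or_concat gs₁).resolve_left h1
        obtain ⟨d, p⟩ := dp
        rw [List.concat_eq_append] at hu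
        obtain ⟨⟨e, q⟩, v, rfl⟩ : ∃ eq v, gs₂ = eq :: v := by
          cases gs₂ with
          | nil => exact absurd rfl h2
          | cons a b => exact ⟨a, b, rfl⟩
        have hgs : gs = u ++ (d, p) :: (c, m) :: (e, q) :: v := by
          rw [hsp, hu]; simp
        have hch : List.Chain' (fun a b => a.1 ≠ b.1) (u ++ (d, p) :: (c, m) :: (e, q) :: v) := by
          have := hg.2; rwa [hgs] at this
        obtain ⟨hcu, hctail, hlink⟩ := List.isChain_append.mp hch
        have hdc : d ≠ c := by
          have := (List.isChain_cons_cons.mp hctail).1; simpa using this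
        have hce : c ≠ e := by
          have := (List.isChain_cons_cons.mp (List.isChain_cons_cons.mp hctail).2).1; simpa using this
        have hctail3 : List.Chain' (fun a b => a.1 ≠ b.1) ((e, q) :: v) :=
          (List.isChain_cons_cons.mp (List.isChain_cons_cons.mp hctail).2).2
        have hev : ∀ z ∈ v.head?, e ≠ z.1 := by
          intro z hz
          exact (List.isChain_cons.mp hctail3).1 z hz
        have hcv : List.Chain' (fun a b => a.1 ≠ b.1) v := (List.isChain_cons.mp hctail3).2
        have hde : d = e := by
          revert hdc hce; cases c <;> cases d <;> cases e <;> simp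
        have hp : 1 ≤ p := hg.1 (d, p) (by rw [hgs]; simp)
        have hq : 1 ≤ q := hg.1 (e, q) (by rw [hgs]; simp)
        have hg'' : IsGroups (u ++ (d, p + q) :: v) := by
          constructor
          · intro g hmem
            rw [List.mem_append, List.mem_cons] at hmem
            rcases hmem with h | h | h
            · exact hg.1 g (by rw [hgs]; simp [h])
            · rw [h]; simp; omega
            · exact hg.1 g (by rw [hgs]; simp [h])
          · refine List.isChain_append.mpr ⟨hcu, ?_, ?_⟩
            · refine List.isChain_cons.mpr ⟨?_, hcv⟩
              intro z hz
              have := hev z hz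
              simpa [hde] using this
            · intro a ha b hb
              simp only [List.head?_cons, Option.mem_def, Option.some.injEq] at hb
              have := hlink a ha (d, p) (by simp)
              rw [← hb]
              simpa using this
        have hx' : x = wordOf u ++ List.replicate p d := by
          rw [← hx, hu, wordOf_append, wordOf_cons]
          simp [wordOf]
        have hy' : y = List.replicate q e ++ wordOf v := by
          rw [← hy2, wordOf_cons]
        have hword : wordOf (u ++ (d, p + q) :: v) = x ++ y := by
          rw [hx', hy', ← hde, wordOf_append, wordOf_cons, List.replicate_add]
          simp only [List.append_assoc]
        have hGood : Good (u ++ (d, p + q) :: v) :=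
          ih _ hg'' (by rw [hw'eq, hword])
        intro A B C hdec hB hA hC hBlen
        rcases split_cases hm hsp hdec hB (hBne' B hBlen) with ⟨t', hA', hg₂'⟩ | ⟨s, hg₁', hC'⟩
        · -- deleted group inside A
          cases t' with
          | nil =>
            -- (c,m) is the last group of A; merge eats the first singleton of B
            obtain ⟨⟨b1, b2⟩, B', rfl⟩ : ∃ b B', B = b :: B' := by
              cases B with
              | nil => exact absurd rfl (hBne' _ hBlen)
              | cons a b => exact ⟨a, b, rfl⟩
            simp only [List.nil_append, List.cons_append] at hg₂'
            have hb : (e, q) = (b1, b2) := ((List.cons.injEq ..).mp hg₂').1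
            have hv : v = B' ++ C := ((List.cons.injEq ..).mp hg₂').2
            obtain ⟨rfl, rfl⟩ : e = b1 ∧ q = b2 := by simpa [Prod.ext_iff] using hb
            have hq1 : q = 1 := by
              have := hB (e, q) (by simp)
              simpa using this
            have lA : A.length = u.length + 2 := by
              rw [hA', hu]; simp
            have hAne : A ≠ [] := by rw [hA']; simp [hu]
            by_cases hB' : B' = []
            · -- singleton checkerboard, direct bound
              subst hB'
              rw [if_neg hAne]
              by_cases hCe : C = [] <;> simp [hCe] <;>
                [skip; have := List.length_pos_iff.mpr hCe] <;> omega
            · have hres := hGood (u ++ [(d, p + 1)]) B' C ?_ ?_ ?_ hC (List.length_pos_iff.mpr hB')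
              · have lB : (((e, q) : Bool × ℕ) :: B').length = B'.length + 1 := by simp
                have hA''ne : (u ++ [(d, p + 1)]) ≠ [] := by simp
                rw [if_neg hAne]
                have lA'' : (u ++ [(d, p + 1)]).length = u.length + 1 := by simp
                rw [if_neg hA''ne] at hres
                by_cases hCe : C = [] <;> simp [hCe] at hres ⊢ <;> omega
              · rw [hv, hq1]
                simp [List.append_assoc]
              · intro g hgm
                exact hB g (by simp [hgm])
              · intro g hgm
                rw [getLast?_append_right' (by simp)] at hgm
                simp at hgm
                subst hgm
                simp
                omega
          | cons t₀ t'' =>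
            simp only [List.cons_append] at hg₂'
            have ht₀ : (e, q) = t₀ := ((List.cons.injEq ..).mp hg₂').1
            have hv : v = t'' ++ B ++ C := by
              have := ((List.cons.injEq ..).mp hg₂').2
              rw [this, List.append_assoc]
            have hres := hGood (u ++ (d, p + q) :: t'') B C ?_ hB ?_ hC hBlen
            · have lA : A.length = u.length + t''.length + 3 := by
                rw [hA', hu]; simp; omega
              have hAne : A ≠ [] := by rw [hA']; simp [hu]
              have lA'' : (u ++ (d, p + q) :: t'').length = u.length + t''.length + 1 := by
                simp; omega
              have hA''ne : (u ++ (d, p + q) :: t'') ≠ [] := by simp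
              rw [if_neg hAne]
              rw [if_neg hA''ne] at hres
              by_cases hCe : C = [] <;> simp [hCe] at hres ⊢ <;> omega
            · rw [hv]; simp [List.append_assoc]
            · intro g hgm
              cases ht'' : t'' with
              | nil =>
                rw [ht''] at hgm
                rw [getLast?_append_right' (by simp)] at hgm
                simp at hgm
                subst hgm
                simp; omega
              | cons a b =>
                have heq : (u ++ (d, p + q) :: t'').getLast? = t''.getLast? := by
                  rw [show u ++ (d, p + q) :: t'' = (u ++ [(d, p + q)]) ++ t'' by simp]
                  exact getLast?_append_right' (by rw [ht'']; simp)
                have heq2 : A.getLast? = t''.getLast? := by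
                  rw [hA', ← ht₀,
                    show gs₁ ++ (c, m) :: (e, q) :: t'' = (gs₁ ++ [(c, m), (e, q)]) ++ t'' by simp]
                  exact getLast?_append_right' (by rw [ht'']; simp)
                exact hA g (by rw [heq2, ← heq]; exact hgm)
        · -- deleted group inside C
          rcases List.eq_nil_or_concat s with hs | ⟨s₀, sb, hs2⟩
          · -- (c,m) is the head of C; merge eats the last singleton of B
            subst hs
            rw [List.append_nil] at hg₁'
            obtain ⟨B₀, ⟨b1, b2⟩, rfl⟩ : ∃ B₀ b, B = B₀ ++ [b] := by
              rcases List.eq_nil_or_concat B with h | ⟨B₀, b, h⟩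
              · exact absurd h (hBne' _ hBlen)
              · exact ⟨B₀, b, by rw [h, List.concat_eq_append]⟩
            have hkey : (A ++ B₀) ++ [(b1, b2)] = u ++ [(d, p)] := by
              rw [← hu, hg₁', List.append_assoc]
            obtain ⟨hAB₀, hb⟩ := List.append_inj' hkey (by simp)
            have hb' : (b1, b2) = (d, p) := by simpa using hb
            obtain ⟨hb1, hb2⟩ : b1 = d ∧ b2 = p := by simpa [Prod.ext_iff] using hb'
            have hp1 : p = 1 := by
              rw [← hb2]
              simpa using hB (b1, b2) (by simp)
            have lC : C.length = v.length + 2 := by rw [hC']; simp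
            have hCne : C ≠ [] := by rw [hC']; simp
            by_cases hB₀ : B₀ = []
            · subst hB₀
              rw [if_neg hCne]
              by_cases hAe : A = [] <;> simp [hAe] <;>
                [skip; have := List.length_pos_iff.mpr hAe] <;> omega
            · have hres := hGood A B₀ ((d, 1 + q) :: v) ?_ ?_ hA ?_ (List.length_pos_iff.mpr hB₀)
              · have hC''ne : ((d, 1 + q) :: v) ≠ [] := by simp
                rw [if_neg hCne]
                rw [if_neg hC''ne] at hres
                have lB : (B₀ ++ [((b1, b2) : Bool × ℕ)]).length = B₀.length + 1 := by simp
                by_cases hAe : A = [] <;> simp [hAe] at hres ⊢ <;> omega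
              · rw [← hAB₀, hp1]
              · intro g hgm
                exact hB g (by simp [hgm])
              · intro g hgm
                simp at hgm
                subst hgm
                simp; omega
          · -- (c,m) is strictly inside C
            rw [List.concat_eq_append] at hs2
            subst hs2
            have hkey : (A ++ B ++ s₀) ++ [sb] = u ++ [(d, p)] := by
              rw [← hu, hg₁']
              simp [List.append_assoc]
            obtain ⟨hABs₀, hsb⟩ := List.append_inj' hkey (by simp)
            have hsb' : sb = (d, p) := by simpa using hsb
            have hres := hGood A B (s₀ ++ (d, p + q) :: v) ?_ hB hA ?_ hBlen
            · have lC : C.length = s₀.length + v.length + 3 := by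
                rw [hC']; simp; omega
              have hCne : C ≠ [] := by
                rw [hC']; intro h; have := congrArg List.length h; simp at this
              have lC'' : (s₀ ++ (d, p + q) :: v).length = s₀.length + v.length + 1 := by
                simp; omega
              have hC''ne : (s₀ ++ (d, p + q) :: v) ≠ [] := by simp
              rw [if_neg hCne]
              rw [if_neg hC''ne] at hres
              by_cases hAe : A = [] <;> simp [hAe] at hres ⊢ <;> omega
            · rw [← hABs₀]
              simp [List.append_assoc]
            · intro g hgm
              cases hs₀ : s₀ with
              | nil =>
                rw [hs₀] at hgm
                simp at hgm
                subst hgm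
                simp; omega
              | cons a b =>
                apply hC
                rw [head?_append_left' (by simp [hs₀])] at hgm
                rw [hC', head?_append_left' (by simp [hs₀]), head?_append_left' (by simp [hs₀])]
                exact hgm


/-- In a solvable one-column two-color Clickomania puzzle with `n` groups,
if the longest checkerboard `C` is strictly interior to the puzzle, then
`|C| ≤ (n - 2) / 2`. -/
theorem longest_checkerboard_interior_le (gs : List (Bool × ℕ)) (hg : IsGroups gs)
    (hs : Solvable (wordOf gs)) (i len : ℕ)
    (hC : IsCheckerboard gs i len)
    (hlongest : ∀ i' len', IsCheckerboard gs i' len' → len' ≤ len)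
    (hint : i ≠ 0 ∧ i + len ≠ gs.length) :
    (len : ℚ) ≤ ((gs.length : ℚ) - 2) / 2 := by
  obtain ⟨hlen1, hilen, hones, hleft, hright⟩ := hC
  obtain ⟨hi0, hiright⟩ := hint
  have hGood : Good gs := solvable_good hs gs hg rfl
  have hi : i ≤ gs.length := by omega
  have hdec : gs = gs.take i ++ (gs.drop i).take len ++ gs.drop (i + len) := by
    have h1 : gs.drop (i + len) = (gs.drop i).drop len := by
      rw [List.drop_drop]
    rw [h1, List.append_assoc, List.take_append_drop, List.take_append_drop]
  have hBmem : ∀ g ∈ (gs.drop i).take len, g.2 = 1 := by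
    intro g hgm
    obtain ⟨j, hj⟩ := List.mem_iff_getElem?.mp hgm
    rw [List.getElem?_take] at hj
    by_cases hjl : j < len
    · rw [if_pos hjl, List.getElem?_drop] at hj
      have h2 := hones (i + j) (by omega) (by omega)
      rw [List.getD_eq_getElem?_getD, hj] at h2
      exact h2
    · rw [if_neg hjl] at hj
      exact absurd hj (by simp)
  have hAlast : ∀ g ∈ (gs.take i).getLast?, 2 ≤ g.2 := by
    intro g hgm
    rw [List.getLast?_eq_getElem?, List.length_take, min_eq_left hi,
      List.getElem?_take, if_pos (by omega : i - 1 < i), Option.mem_def] at hgm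
    have h2 := hleft.resolve_left hi0
    rw [List.getD_eq_getElem?_getD, hgm] at h2
    exact h2
  have hChead : ∀ g ∈ (gs.drop (i + len)).head?, 2 ≤ g.2 := by
    intro g hgm
    rw [List.head?_drop, Option.mem_def] at hgm
    have h2 := hright.resolve_left hiright
    rw [List.getD_eq_getElem?_getD, hgm] at h2
    exact h2
  have lA : (gs.take i).length = i := by simp [hi]
  have lB : ((gs.drop i).take len).length = len := by simp; omega
  have lC : (gs.drop (i + len)).length = gs.length - (i + len) := by simp
  have hres := hGood _ _ _ hdec hBmem hAlast hChead (by omega)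
  have hAne : gs.take i ≠ [] := by
    intro h
    rw [h] at lA
    simp at lA
    omega
  have hCne : gs.drop (i + len) ≠ [] := by
    intro h
    rw [h] at lC
    simp at lC
    omega
  rw [if_neg hAne, if_neg hCne, lA, lB, lC] at hres
  have hfin : 2 * len + 2 ≤ gs.length := by omega
  have hq : (2 * len + 2 : ℚ) ≤ (gs.length : ℚ) := by exact_mod_cast hfin
  linarith
end
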